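/- arXiv:math/0308194 — 11 statements merged into one kernel-verified Lean document; each statement's English description precedes it below -/
import Mathlib

section
/- Let n ≥ 22 be a natural number and let α be a real number with 1 ≤ α ≤ √n. Then the sum of θ(n−k) over the integers k with 1 ≤ k ≤ √n/α is strictly less than (1/α)·√n·log(n) + 2·(1 + 0.6/α)·√n. -/
/-!
Every `m` has at most twice as many divisors as it has divisors `≤ √m`, since `d ↦ m / d` swaps
the two halves. The `K = ⌊√n / α⌋` numbers `n - k` form an interval of length `K` below `n`, so
after exchanging the sums each `d ≤ s = ⌊√(n - 1)⌋` is counted at most `(K - 1) / d + 1` times,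
and the sum is at most `2 (K - 1) H_s + 2 s` with `s < √n`. Writing `H_s = log s + c_s` with
`c_s` decreasing and `2 log s ≤ log n`, it remains to show `2 (K - 1) c_s ≤ 2 log s + 1.2 K`;
this follows from `c_32 < 0.6` for large `s` and from `c_4`, `c_16` and `K ≤ s + 1` for small `s`.
-/

open Finset Real

theorem Finset.sum_Icc_sub_eq_sum_Ioc {M : Type*} [AddCommMonoid M] (f : ℕ → M) {n K : ℕ}
    (hK : K < n) :
    ∑ k ∈ Icc 1 K, f (n - k) = ∑ m ∈ Ioc (n - 1 - K) (n - 1), f m := by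
  refine sum_nbij' (n - ·) (n - ·) ?_ ?_ ?_ ?_ (fun _ _ ↦ rfl) <;>
    intro k hk <;> simp only [mem_Icc, mem_Ioc] at hk ⊢ <;> omega

namespace Nat

theorem card_divisors_le_two_mul_card_filter_dvd {m s : ℕ} (hm : m ≠ 0) (hs : m.sqrt ≤ s) :
    #m.divisors ≤ 2 * #{d ∈ Icc 1 s | d ∣ m} := by
  set small : Finset ℕ := {d ∈ Icc 1 s | d ∣ m}
  have hcover : m.divisors ⊆ small ∪ small.image (m / ·) := by
    intro d hd
    obtain ⟨hdm, -⟩ := mem_divisors.mp hd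
    have hd0 : 0 < d := pos_of_mem_divisors hd
    simp only [small, mem_union, mem_image, mem_filter, mem_Icc]
    by_cases hds : d ≤ s
    · exact Or.inl ⟨⟨hd0, hds⟩, hdm⟩
    · refine Or.inr ⟨m / d, ⟨⟨div_pos (le_of_dvd (pos_of_ne_zero hm) hdm) hd0, ?_⟩,
        div_dvd_of_dvd hdm⟩, Nat.div_div_self hdm hm⟩
      have hsd : m.sqrt + 1 ≤ d := by omega
      have hlt : m < (m.sqrt + 1) * (m.sqrt + 1) := by simpa [sq] using m.lt_succ_sqrt'
      refine le_trans (le_of_lt_succ ((div_lt_iff_lt_mul hd0).mpr ?_)) hs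
      exact hlt.trans_le (Nat.mul_le_mul_left _ hsd)
  calc #m.divisors ≤ #(small ∪ small.image (m / ·)) := card_le_card hcover
    _ ≤ #small + #small := (card_union_le _ _).trans (Nat.add_le_add_left Finset.card_image_le _)
    _ = 2 * #small := by ring

theorem card_filter_dvd_Ioc_le {a b d : ℕ} (hd : 0 < d) (hab : a < b) :
    #{m ∈ Ioc a b | d ∣ m} ≤ (b - a - 1) / d + 1 := by
  obtain ⟨c, rfl⟩ : ∃ c, b = a + c + 1 := ⟨b - a - 1, by omega⟩
  have hcount : #{m ∈ Ioc a (a + c + 1) | d ∣ m} = (a + c + 1) / d - a / d := by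
    rw [← Ioc_filter_dvd_card_eq_div, ← Ioc_filter_dvd_card_eq_div,
      ← Ioc_union_Ioc_eq_Ioc a.zero_le (by omega), filter_union,
      card_union_of_disjoint (disjoint_filter_filter (Ioc_disjoint_Ioc_of_le le_rfl))]
    omega
  have ha := lt_mul_div_succ a hd
  have hc := lt_mul_div_succ c hd
  have hb : (a + c + 1) / d < a / d + c / d + 2 := by
    rw [div_lt_iff_lt_mul hd]
    nlinarith
  rw [hcount, show a + c + 1 - a - 1 = c by omega]
  exact Nat.sub_le_iff_le_add.mpr (by linarith)

theorem sum_card_divisors_sub_le {n K s : ℕ} (hK : K < n) (hs : (n - 1).sqrt ≤ s) :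
    ∑ k ∈ Icc 1 K, #(n - k).divisors ≤ 2 * ∑ d ∈ Icc 1 s, ((K - 1) / d + 1) := by
  rw [Finset.sum_Icc_sub_eq_sum_Ioc (fun m ↦ #m.divisors) hK, mul_sum]
  calc ∑ m ∈ Ioc (n - 1 - K) (n - 1), #m.divisors
      ≤ ∑ m ∈ Ioc (n - 1 - K) (n - 1), 2 * #{d ∈ Icc 1 s | d ∣ m} := by
        refine sum_le_sum fun m hm ↦ ?_
        obtain ⟨hm0, hmn⟩ := mem_Ioc.mp hm
        exact card_divisors_le_two_mul_card_filter_dvd (by omega) ((sqrt_le_sqrt hmn).trans hs)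
    _ = ∑ d ∈ Icc 1 s, 2 * #{m ∈ Ioc (n - 1 - K) (n - 1) | d ∣ m} := by
        simp only [← mul_sum, card_filter]
        rw [sum_comm]
    _ ≤ ∑ d ∈ Icc 1 s, 2 * ((K - 1) / d + 1) := by
        refine sum_le_sum fun d hd ↦ Nat.mul_le_mul_left 2 ?_
        rcases K.eq_zero_or_pos with rfl | hK0
        · simp
        convert card_filter_dvd_Ioc_le (mem_Icc.mp hd).1 (by omega : n - 1 - K < n - 1) using 3
        omega

end Nat

theorem sum_Icc_div_add_one_le_mul_harmonic (K s : ℕ) :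
    ((∑ d ∈ Icc 1 s, (K / d + 1) : ℕ) : ℝ) ≤ K * (harmonic s : ℝ) + s := by
  rw [harmonic_eq_sum_Icc]
  push_cast
  rw [sum_add_distrib, mul_sum, sum_const, Nat.card_Icc, nsmul_eq_mul]
  simp only [Nat.add_sub_cancel, mul_one]
  gcongr with d
  exact Nat.cast_div_le.trans_eq (div_eq_mul_inv _ _)

theorem eulerMascheroniSeq'_two_pow (j : ℕ) :
    eulerMascheroniSeq' (2 ^ j) = harmonic (2 ^ j) - j * log 2 := by
  rw [eulerMascheroniSeq', if_neg (pow_ne_zero _ two_ne_zero)]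
  push_cast
  rw [log_pow]

theorem eulerMascheroniSeq'_four_le : eulerMascheroniSeq' 4 ≤ 0.7 := by
  have h := eulerMascheroniSeq'_two_pow 2
  norm_num [harmonic, sum_range_succ] at h
  linarith [log_two_gt_d9]

theorem eulerMascheroniSeq'_sixteen_le : eulerMascheroniSeq' 16 ≤ 0.61 := by
  have h := eulerMascheroniSeq'_two_pow 4
  norm_num [harmonic, sum_range_succ] at h
  linarith [log_two_gt_d9]

theorem eulerMascheroniSeq'_thirtyTwo_le : eulerMascheroniSeq' 32 ≤ 0.6 := by
  have h := eulerMascheroniSeq'_two_pow 5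
  norm_num [harmonic, sum_range_succ] at h
  linarith [log_two_gt_d9]

theorem harmonic_eq_log_add_eulerMascheroniSeq' {s : ℕ} (hs : s ≠ 0) :
    (harmonic s : ℝ) = log s + eulerMascheroniSeq' s := by
  rw [eulerMascheroniSeq', if_neg hs]
  ring

theorem two_mul_sub_one_mul_harmonic_le {s : ℕ} (hs : 4 ≤ s) {x : ℝ} (hx1 : 1 ≤ x)
    (hxs : x ≤ s + 1) : 2 * (x - 1) * harmonic s ≤ x * (2 * log s + 1.2) := by
  rw [harmonic_eq_log_add_eulerMascheroniSeq' (by omega)]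
  suffices h : 2 * (x - 1) * eulerMascheroniSeq' s ≤ 2 * log s + 1.2 * x by nlinarith
  have hlog_s : 2 * log 2 ≤ log s := by
    rw [← log_rpow two_pos]
    exact log_le_log (by norm_num) (by norm_num; exact_mod_cast hs)
  have hx0 : 0 ≤ x - 1 := by linarith
  -- `eulerMascheroniSeq' s = H_s - log s` decreases towards `γ ≈ 0.577`; it is below `0.6`
  -- from `s = 32` on, and for smaller `s` the bound `x ≤ s + 1` makes up the difference.
  have hanti := strictAnti_eulerMascheroniSeq'.antitone
  rcases le_or_gt 32 s with h32 | h32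
  · have hc := (hanti h32).trans eulerMascheroniSeq'_thirtyTwo_le
    nlinarith [mul_le_mul_of_nonneg_left hc hx0, log_two_gt_d9]
  have hs31 : (s : ℝ) ≤ 31 := by exact_mod_cast Nat.le_of_lt_succ h32
  rcases le_or_gt 16 s with h16 | h16
  · have hc := (hanti h16).trans eulerMascheroniSeq'_sixteen_le
    nlinarith [mul_le_mul_of_nonneg_left hc hx0, log_two_gt_d9]
  · have hs15 : (s : ℝ) ≤ 15 := by exact_mod_cast Nat.le_of_lt_succ h16
    have hc := (hanti hs).trans eulerMascheroniSeq'_four_le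
    nlinarith [mul_le_mul_of_nonneg_left hc hx0, log_two_gt_d9]

theorem sum_card_divisors_sub_le_harmonic {n K : ℕ} (hK1 : 1 ≤ K) (hKn : K < n) :
    ∑ k ∈ Icc 1 K, (#(n - k).divisors : ℝ) ≤
      2 * ((K - 1) * harmonic (n - 1).sqrt + (n - 1).sqrt) := by
  calc ∑ k ∈ Icc 1 K, (#(n - k).divisors : ℝ)
      = ((∑ k ∈ Icc 1 K, #(n - k).divisors : ℕ) : ℝ) := by push_cast; rfl
    _ ≤ ((2 * ∑ d ∈ Icc 1 (n - 1).sqrt, ((K - 1) / d + 1) : ℕ) : ℝ) := by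
        exact_mod_cast Nat.sum_card_divisors_sub_le hKn le_rfl
    _ ≤ 2 * (((K - 1 : ℕ) : ℝ) * harmonic (n - 1).sqrt + (n - 1).sqrt) := by
        rw [Nat.cast_mul, Nat.cast_ofNat]
        gcongr
        exact sum_Icc_div_add_one_le_mul_harmonic (K - 1) _
    _ = 2 * ((K - 1) * harmonic (n - 1).sqrt + (n - 1).sqrt) := by
        rw [Nat.cast_sub hK1, Nat.cast_one]

theorem natCast_sqrt_pred_lt_sqrt {n : ℕ} (hn : n ≠ 0) : ((n - 1).sqrt : ℝ) < √(n : ℝ) := by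
  refine (lt_sqrt (by positivity)).mpr ?_
  exact_mod_cast (Nat.sqrt_le' (n - 1)).trans_lt (by omega)

theorem sqrt_le_natCast_sqrt_pred_add_one (n : ℕ) : √(n : ℝ) ≤ (n - 1).sqrt + 1 := by
  refine (sqrt_le_left (by positivity)).mpr ?_
  have : n - 1 < ((n - 1).sqrt + 1) ^ 2 := Nat.sqrt_lt'.mp (Nat.lt_succ_self _)
  exact_mod_cast (by omega : n ≤ ((n - 1).sqrt + 1) ^ 2)

/-- For a natural number `n ≥ 22` and a real `α` with `1 ≤ α ≤ √n`,
the sum of the number-of-divisors function `θ(n-k)` over integers `k` with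
`1 ≤ k ≤ √n / α` is strictly less than `(1/α)·√n·log n + 2·(1 + 0.6/α)·√n`. -/
theorem sum_divisors_bound (n : ℕ) (hn : 22 ≤ n) (α : ℝ) (hα1 : 1 ≤ α)
    (hα2 : α ≤ Real.sqrt n) :
    (∑ k ∈ Finset.Icc 1 ⌊Real.sqrt n / α⌋₊, ((n - k).divisors.card : ℝ)) <
      (1 / α) * Real.sqrt n * Real.log n + 2 * (1 + 0.6 / α) * Real.sqrt n := by
  set R := √(n : ℝ)
  set x := R / α
  set s := (n - 1).sqrt
  have hα0 : 0 < α := by linarith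
  have hx1 : 1 ≤ x := (one_le_div hα0).mpr hα2
  have hxR : x ≤ R := div_le_self (sqrt_nonneg _) hα1
  have hKx : (⌊x⌋₊ : ℝ) ≤ x := Nat.floor_le (by positivity)
  have hRn : R < n := (sqrt_lt' (by positivity)).mpr (by norm_cast; nlinarith)
  have hs4 : 4 ≤ s := Nat.le_sqrt.mpr (by omega)
  have hsR : (s : ℝ) < R := natCast_sqrt_pred_lt_sqrt (by omega)
  have hlog : 2 * log s ≤ log n := by
    have := log_le_log (by positivity) hsR.le
    rw [log_sqrt n.cast_nonneg] at this
    linarith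
  have hH : (0 : ℝ) ≤ harmonic s := by exact_mod_cast (harmonic_pos (by omega)).le
  calc ∑ k ∈ Icc 1 ⌊x⌋₊, (#(n - k).divisors : ℝ)
      ≤ 2 * ((⌊x⌋₊ - 1) * harmonic s + s) :=
        sum_card_divisors_sub_le_harmonic (Nat.floor_pos.mpr hx1)
          (by exact_mod_cast hKx.trans_lt (hxR.trans_lt hRn))
    _ ≤ 2 * (x - 1) * harmonic s + 2 * s := by nlinarith
    _ ≤ x * (2 * log s + 1.2) + 2 * s := by
        linarith [two_mul_sub_one_mul_harmonic_le hs4 hx1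
          (hxR.trans (sqrt_le_natCast_sqrt_pred_add_one n))]
    _ < x * (log n + 1.2) + 2 * R := by nlinarith
    _ = 1 / α * R * log n + 2 * (1 + 0.6 / α) * R := by
        simp only [x]
        ring
end

section
/- Let a, b, x, y be positive integers with ab = n, x > 1, y > 1, and suppose ax ≡ 1 (mod y) and by ≡ 1 (mod x). Define the positive integer k by ax + by − 1 = kxy. Then max(x, y) ≤ (2n − 1)/(2k − 1). -/
/-! Put `d = k y - a`. Then `d x = b y - 1 > 0`, so `d ≥ 1`, and modulo `a x + b y = k x y + 1`
`y (2ab - 1 - (2k - 1) x) = 2 (a - 1) (x (d - 1) + 1) + (x - 1) (y - 2) ≥ 0`.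
The same argument with `(a, x)` and `(b, y)` exchanged bounds `y`. -/

lemma lt_mul_of_mul_add_mul_eq_mul_add_one {a b x y k : ℤ} (hx : 0 < x) (hby : 2 ≤ b * y)
    (h : a * x + b * y = k * x * y + 1) : a < k * y := by
  have hpos : 0 < (k * y - a) * x := by linear_combination hby + h
  linarith [pos_of_mul_pos_left hpos hx.le]

theorem two_mul_sub_one_mul_le_of_mul_add_mul_eq {a b x y k : ℤ} (ha : 0 < a) (hb : 0 < b)
    (hx : 0 < x) (hy : 1 < y) (h : a * x + b * y = k * x * y + 1) :
    (2 * k - 1) * x ≤ 2 * (a * b) - 1 := by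
  have hak : a + 1 ≤ k * y := lt_mul_of_mul_add_mul_eq_mul_add_one hx (by nlinarith) h
  have key : y * (2 * (a * b) - 1 - (2 * k - 1) * x)
      = 2 * (a - 1) * (x * (k * y - a - 1) + 1) + (x - 1) * (y - 2) := by
    linear_combination 2 * a * h
  have hnonneg : 0 ≤ y * (2 * (a * b) - 1 - (2 * k - 1) * x) := by
    rw [key]
    have hd : 0 ≤ x * (k * y - a - 1) := mul_nonneg hx.le (by linarith)
    have hxy : 0 ≤ (x - 1) * (y - 2) := mul_nonneg (by linarith) (by linarith)
    nlinarith
  linarith [nonneg_of_mul_nonneg_right hnonneg (by linarith : 0 < y)]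

theorem max_xy_bound_general (n a b x y k : ℕ)
    (ha : 0 < a) (hb : 0 < b) (hab : a * b = n)
    (hx : 1 < x) (hy : 1 < y)
    (hk : 0 < k)
    (hk' : a * x + b * y = k * x * y + 1) :
    (max x y : ℝ) ≤ (2 * (n : ℝ) - 1) / (2 * (k : ℝ) - 1) := by
  have hk'ℤ : (a : ℤ) * x + b * y = k * x * y + 1 := by exact_mod_cast hk'
  have hxbound := two_mul_sub_one_mul_le_of_mul_add_mul_eq (a := a) (b := b)
    (by omega) (by omega) (by omega) (by omega) hk'ℤ
  have hybound := two_mul_sub_one_mul_le_of_mul_add_mul_eq (a := b) (b := a) (x := y) (y := x)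
    (k := k) (by omega) (by omega) (by omega) (by omega) (by linear_combination hk'ℤ)
  have hdenom : (0 : ℝ) < 2 * k - 1 := by
    have : (1 : ℝ) ≤ k := by exact_mod_cast hk
    linarith
  rw [le_div_iff₀ hdenom, max_mul_of_nonneg _ _ hdenom.le, max_le_iff, ← hab]
  push_cast
  constructor
  · linarith [(by exact_mod_cast hxbound : (2 * k - 1) * (x : ℝ) ≤ 2 * (a * b) - 1)]
  · linarith [(by exact_mod_cast hybound : (2 * k - 1) * (y : ℝ) ≤ 2 * (b * a) - 1)]

/-- With `a, b, x, y` positive integers, `ab = n`, `x, y > 1`,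
`ax ≡ 1 (mod y)`, `by ≡ 1 (mod x)`, and the positive integer `k` defined by
`ax + by - 1 = kxy`, we have `max(x, y) ≤ (2n - 1)/(2k - 1)`. -/
theorem max_xy_bound (n a b x y k : ℕ)
    (ha : 0 < a) (hb : 0 < b) (hab : a * b = n)
    (hx : 1 < x) (hy : 1 < y)
    (hax : a * x ≡ 1 [MOD y]) (hby : b * y ≡ 1 [MOD x])
    (hk : 0 < k)
    (hk' : a * x + b * y = k * x * y + 1) :
    (max x y : ℝ) ≤ (2 * (n : ℝ) - 1) / (2 * (k : ℝ) - 1) :=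
  max_xy_bound_general n a b x y k ha hb hab hx hy hk hk'
end

section
/- Let a, b, x, y be positive integers with ab = n, x > 1, y > 1, and suppose ax ≡ 1 (mod y) and by ≡ 1 (mod x). Define the positive integer k by ax + by − 1 = kxy. Then k ≤ (n + 1)/3. -/
lemma k_bound_aux (a b x y k : ℤ) (ha : 1 ≤ a) (hb : 1 ≤ b)
    (hx : 2 ≤ x) (hy : 2 ≤ y) (hxy : x ≤ y) (hk : 1 ≤ k)
    (hk' : a * x + b * y = k * x * y + 1) : 3 * k ≤ a * b + 1 := by
  have h1 : y * (k * x - b) = a * x - 1 := by ring_nf; linarith [hk']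
  have h2 : x * (k * y - a) = b * y - 1 := by ring_nf; linarith [hk']
  have hax1 : 1 ≤ a * x - 1 := by nlinarith
  have hby1 : 1 ≤ b * y - 1 := by nlinarith
  have hu : 1 ≤ k * x - b := by nlinarith
  have hv : 1 ≤ k * y - a := by nlinarith
  have hsum : k * x ≤ (k * x - b) + (k * y - a) := by nlinarith
  have hab : a * b = k + (k * x - b) * (k * y - a) := by ring_nf; nlinarith [hk']
  nlinarith [mul_le_mul hu hv (by linarith) (by linarith : (0:ℤ) ≤ k*x - b),
    mul_pos (show (0:ℤ) < k*x - b by linarith) (show (0:ℤ) < k*y - a by linarith),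
    sq_nonneg ((k*x - b) - 1), sq_nonneg ((k*y - a) - 1),
    mul_nonneg (by linarith : (0:ℤ) ≤ k*x - b - 1) (by linarith : (0:ℤ) ≤ k*y - a - 1)]

/-- With `a, b, x, y` positive integers, `ab = n`, `x, y > 1`,
`ax ≡ 1 (mod y)`, `by ≡ 1 (mod x)`, and the positive integer `k` defined by
`ax + by - 1 = kxy`, we have `k ≤ (n + 1)/3`. -/
theorem k_bound (n a b x y k : ℕ)
    (ha : 0 < a) (hb : 0 < b) (hab : a * b = n)
    (hx : 1 < x) (hy : 1 < y)
    (hax : a * x ≡ 1 [MOD y]) (hby : b * y ≡ 1 [MOD x])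
    (hk : 0 < k)
    (hk' : a * x + b * y = k * x * y + 1) :
    (k : ℝ) ≤ ((n : ℝ) + 1) / 3 := by
  have key : 3 * (k : ℤ) ≤ (a : ℤ) * b + 1 := by
    rcases le_total (x : ℤ) (y : ℤ) with h | h
    · exact k_bound_aux a b x y k (by exact_mod_cast ha) (by exact_mod_cast hb)
        (by exact_mod_cast hx) (by exact_mod_cast hy) h (by exact_mod_cast hk)
        (by exact_mod_cast hk')
    · have := k_bound_aux b a y x k (by exact_mod_cast hb) (by exact_mod_cast ha)
        (by exact_mod_cast hy) (by exact_mod_cast hx) h (by exact_mod_cast hk)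
        (by push_cast; push_cast at hk' ⊢; linarith [hk'])
      linarith [this]
  have hn : (a:ℤ) * b = n := by exact_mod_cast hab
  rw [hn] at key
  have : (3:ℝ) * k ≤ (n:ℝ) + 1 := by exact_mod_cast key
  linarith
end

section
/- Let a, b be fixed positive integers with ab = n > 1, and let ρ(a,b) denote the number of pairs (x, y) of integers with 1 < x < y such that xy divides ax + by − 1. Then for every real number α with 1 ≤ α ≤ √n, one has ρ(a,b) < (1/α)·√n·log(n) + 2·(1 + 0.6/α)·√n + (2n − 1)·α/(2√n − α). -/
/-!
For a solution `(x, y)` put `k = (a x + b y - 1) / (x y)`. Then `k x = b + c` and `k y = a + d`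
with `c, d ≥ 1`, `y c + 1 = a x`, `x d + 1 = b y` and `c d + k = n`, and a case split on
`y ≤ 2a` gives `(2k - 1) y < 2n`.

Split the solutions at `K = ⌊√n / α⌋`. If `k > K`, then `y ≤ (2n - 1) / (2K + 1)`, and `y`
determines `x` as the inverse of `a` modulo `y`: this gives the last term. If `k ≤ K`, the
solution is determined by `k` and `e = min c d`, a divisor of `n - k` with `e ≤ √(n - 1)`; for a
fixed `e` at most `(K - 1) / e + 1` values `k ≤ K` are `≡ n (mod e)`. So there are at most
`2 ((K - 1) H_E + E)` such solutions, where `E = ⌊√(n - 1)⌋`. Summing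
`1/t ≤ log (t + 1/2) - log (t - 1/2)` gives `H_E ≤ log (E + 1/2) + 3/5`, hence the first two
terms.
-/

open Finset Real

lemma two_mul_le_log_one_add_sub_log_one_sub {u : ℝ} (hu₀ : 0 ≤ u) (hu₁ : u < 1) :
    2 * u ≤ log (1 + u) - log (1 - u) := by
  have h := hasSum_log_sub_log_of_abs_lt_one (x := u) (by rwa [abs_of_nonneg hu₀])
  simpa using le_hasSum h 0 fun j _ => by positivity

lemma inv_le_log_add_half_sub_log_sub_half {t : ℝ} (ht : 1 / 2 < t) :
    t⁻¹ ≤ log (t + 1 / 2) - log (t - 1 / 2) := by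
  have ht₀ : 0 < t := by linarith
  have h := two_mul_le_log_one_add_sub_log_one_sub (u := 1 / (2 * t)) (by positivity)
    (by rw [div_lt_one (by positivity)]; linarith)
  have h₁ : 1 + 1 / (2 * t) = (t + 1 / 2) / t := by field_simp
  have h₂ : 1 - 1 / (2 * t) = (t - 1 / 2) / t := by field_simp
  rw [h₁, h₂, log_div (by linarith) ht₀.ne', log_div (by linarith) ht₀.ne'] at h
  convert h using 1
  · field_simp
  · ring

lemma harmonic_le_log_add_half_add_three_fifths {E : ℕ} (hE : 1 ≤ E) :
    (harmonic E : ℝ) ≤ log (E + 1 / 2) + 3 / 5 := by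
  induction E, hE using Nat.le_induction with
  | base =>
    -- `log (3 / 2) ≥ 2 / 5`
    have h := two_mul_le_log_one_add_sub_log_one_sub (u := 1 / 5) (by norm_num) (by norm_num)
    rw [← log_div (by norm_num) (by norm_num)] at h
    norm_num [harmonic] at h ⊢
    linarith
  | succ E hE ih =>
    have h := inv_le_log_add_half_sub_log_sub_half (t := E + 1)
      (by linarith [E.cast_nonneg (α := ℝ)])
    rw [harmonic_succ]
    push_cast
    have : (E : ℝ) + 1 - 1 / 2 = E + 1 / 2 := by ring
    rw [this] at h
    linarith

lemma sub_one_mul_harmonic_le {K E : ℕ} {s α : ℝ} (hK : 1 ≤ K) (hKs : K ≤ s / α)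
    (hE : 1 ≤ E) (hEs : E ≤ s) (hα : 1 ≤ α) :
    (K - 1) * harmonic E ≤ s / α * (log s + 3 / 5) := by
  have hs : 1 ≤ s := le_trans (by exact_mod_cast hE) hEs
  -- `log x ≤ x - 1` at `x = (E + 1/2) / s`
  have hlog : log (E + 1 / 2) ≤ log s + 1 / (2 * s) := by
    have h := log_le_sub_one_of_pos (x := (E + 1 / 2) / s) (by positivity)
    rw [log_div (by positivity) (by positivity)] at h
    have : (E + 1 / 2) / s - 1 ≤ 1 / (2 * s) := by
      rw [div_sub_one (by positivity), div_le_div_iff₀ (by positivity) (by positivity)]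
      nlinarith
    linarith
  have hH : (harmonic E : ℝ) ≤ log s + 3 / 5 + 1 / (2 * s) := by
    have := harmonic_le_log_add_half_add_three_fifths hE; linarith
  have hKR : (1 : ℝ) ≤ K := by exact_mod_cast hK
  -- the `- 1` in `K - 1` absorbs the error term `1 / (2 s)`
  calc (K - 1) * (harmonic E : ℝ) ≤ (s / α - 1) * (log s + 3 / 5 + 1 / (2 * s)) :=
        mul_le_mul (by linarith) hH (by exact_mod_cast (harmonic_pos (by omega)).le) (by linarith)
    _ = s / α * (log s + 3 / 5) - (log s + 3 / 5 - 1 / (2 * α) + 1 / (2 * s)) := by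
        field_simp; ring
    _ ≤ s / α * (log s + 3 / 5) := by
        have : 1 / (2 * α) ≤ 1 / 2 := by
          rw [div_le_div_iff₀ (by positivity) (by positivity)]; linarith
        have : 0 ≤ 1 / (2 * s) := by positivity
        linarith [log_nonneg hs]

lemma natCast_div_two_mul_floor_add_one_lt {m : ℕ} (hm : 0 < m) {s α : ℝ} (hα : 0 < α)
    (hαs : α ≤ s) : ((m / (2 * ⌊s / α⌋₊ + 1) : ℕ) : ℝ) < m * α / (2 * s - α) := by
  have hfloor := Nat.lt_floor_add_one (s / α)
  rw [div_lt_iff₀ hα] at hfloor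
  grw [Nat.cast_div_le]
  rw [lt_div_iff₀ (by linarith), div_mul_eq_mul_div, div_lt_iff₀ (by positivity)]
  push_cast
  have : (0 : ℝ) < m := by exact_mod_cast hm
  nlinarith

lemma Nat.eq_of_mul_add_one_eq_of_lt {a y x₁ x₂ c₁ c₂ : ℕ}
    (h₁ : y * c₁ + 1 = a * x₁) (h₂ : y * c₂ + 1 = a * x₂) (hx₁ : x₁ < y) (hx₂ : x₂ < y) :
    x₁ = x₂ := by
  have e₁ : (a * x₁ : ZMod y) = 1 := by
    simpa using congrArg (Nat.cast : ℕ → ZMod y) h₁.symm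
  have e₂ : (a * x₂ : ZMod y) = 1 := by
    simpa using congrArg (Nat.cast : ℕ → ZMod y) h₂.symm
  have : (x₁ : ZMod y) = x₂ := by
    linear_combination (x₂ : ZMod y) * e₁ - (x₁ : ZMod y) * e₂
  rw [ZMod.natCast_eq_natCast_iff', Nat.mod_eq_of_lt hx₁, Nat.mod_eq_of_lt hx₂] at this
  exact this

lemma Nat.Icc_filter_modEq_card_le (lo hi v : ℕ) {e : ℕ} (he : 0 < e) :
    #{k ∈ Icc lo hi | k ≡ v [MOD e]} ≤ (hi - lo) / e + 1 := by
  set S := {k ∈ Icc lo hi | k ≡ v [MOD e]}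
  rcases S.eq_empty_or_nonempty with hS | hS
  · simp [hS]
  -- every element of `S` lies in the progression `min S + e * j`, `j ≤ (hi - lo) / e`
  have hsub : S ⊆ (range ((hi - lo) / e + 1)).image (fun j => S.min' hS + e * j) := by
    intro k hk
    have hmin := S.min'_mem hS
    have hle := S.min'_le k hk
    rw [mem_filter, mem_Icc] at hk hmin
    obtain ⟨j, hj⟩ := (Nat.modEq_iff_dvd' hle).1 (hmin.2.trans hk.2.symm)
    refine mem_image.2 ⟨j, mem_range.2 (Nat.lt_succ_of_le ?_), by omega⟩
    rw [Nat.le_div_iff_mul_le he, mul_comm]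
    omega
  exact (card_le_card hsub).trans (Finset.card_image_le.trans (card_range _).le)

namespace Rho

def solutions (a b : ℕ) : Set (ℕ × ℕ) :=
  {p | 1 < p.1 ∧ p.1 < p.2 ∧ p.1 * p.2 ∣ a * p.1 + b * p.2 - 1}

def multiplier (a b : ℕ) (p : ℕ × ℕ) : ℕ := (a * p.1 + b * p.2 - 1) / (p.1 * p.2)

def cofactorFst (a b : ℕ) (p : ℕ × ℕ) : ℕ := multiplier a b p * p.1 - b

def cofactorSnd (a b : ℕ) (p : ℕ × ℕ) : ℕ := multiplier a b p * p.2 - a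

structure IsSolutionData (a b x y k c d : ℕ) : Prop where
  k_pos : 0 < k
  c_pos : 0 < c
  d_pos : 0 < d
  mul_fst : k * x = b + c
  mul_snd : k * y = a + d
  mul_add : c * d + k = a * b
  snd_mul_add_one : y * c + 1 = a * x
  fst_mul_add_one : x * d + 1 = b * y

variable {a b : ℕ}

lemma isSolutionData_of_mem (ha : 0 < a) (hb : 0 < b) {p : ℕ × ℕ} (hp : p ∈ solutions a b) :
    IsSolutionData a b p.1 p.2 (multiplier a b p) (cofactorFst a b p) (cofactorSnd a b p) := by
  obtain ⟨x, y⟩ := p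
  obtain ⟨hx, hxy, k, hk⟩ := hp
  simp only [cofactorFst, cofactorSnd, multiplier] at hk ⊢
  have hax : 2 ≤ a * x := by nlinarith
  have hby : 2 ≤ b * y := by nlinarith
  have hkey : k * (x * y) + 1 = a * x + b * y := by rw [mul_comm k]; omega
  rw [hk, Nat.mul_div_cancel_left _ (Nat.mul_pos (by omega) (by omega))]
  have hbk : b < k * x := by
    by_contra! h
    nlinarith [Nat.mul_le_mul_right y h]
  have hak : a < k * y := by
    by_contra! h
    nlinarith [Nat.mul_le_mul_right x h]
  have hkey' : (k : ℤ) * (x * y) + 1 = a * x + b * y := by exact_mod_cast hkey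
  have hyc : y * (k * x - b) + 1 = a * x := by
    zify [hbk.le]; linear_combination hkey'
  have hxd : x * (k * y - a) + 1 = b * y := by
    zify [hak.le]; linear_combination hkey'
  refine ⟨Nat.pos_of_ne_zero ?_, by omega, by omega, by omega, by omega, ?_, hyc, hxd⟩
  · rintro rfl; simp at hkey; omega
  · zify [hbk.le, hak.le]; linear_combination (k : ℤ) * hkey'

section

variable {x y k c d : ℕ}

lemma IsSolutionData.two_mul_mul_lt (h : IsSolutionData a b x y k c d) (hx : 2 ≤ x) :
    2 * (k * y) < 2 * (a * b) + y := by
  have hb : 1 ≤ b := Nat.pos_of_ne_zero (by rintro rfl; simpa using h.fst_mul_add_one)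
  have hc := h.c_pos
  have hd := h.d_pos
  have hkx := h.mul_fst
  have hky := h.mul_snd
  have hyc := h.snd_mul_add_one
  have hxd := h.fst_mul_add_one
  rcases le_or_gt y (2 * a) with hya | hay
  · -- `2 d ≤ x d < b y ≤ 2 a b`
    nlinarith [Nat.mul_le_mul_right d hx]
  · -- now `2 c < x`, hence `x (2k - 1) < 2 b`, while `y ≤ a x - 1`
    have h2c : 2 * c < x := by
      by_contra! h2c
      nlinarith [Nat.mul_le_mul_right c hay.le]
    have : 2 * (k * x) < 2 * b + x := by omega
    nlinarith

lemma IsSolutionData.eq_of_eq {x' y' c' d' : ℕ} (h : IsSolutionData a b x y k c d)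
    (h' : IsSolutionData a b x' y' k c' d') (hcd : c = c' ∨ d = d') : x = x' ∧ y = y' := by
  have hcd' : c = c' ∧ d = d' := by
    have e := h.mul_add.trans h'.mul_add.symm
    rcases hcd with rfl | rfl
    · exact ⟨rfl, Nat.eq_of_mul_eq_mul_left h.c_pos (by omega)⟩
    · exact ⟨Nat.eq_of_mul_eq_mul_right h.d_pos (by omega), rfl⟩
  obtain ⟨rfl, rfl⟩ := hcd'
  exact ⟨Nat.eq_of_mul_eq_mul_left h.k_pos (h.mul_fst.trans h'.mul_fst.symm),
    Nat.eq_of_mul_eq_mul_left h.k_pos (h.mul_snd.trans h'.mul_snd.symm)⟩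

end

lemma solutions_finite (ha : 0 < a) (hb : 0 < b) : (solutions a b).Finite := by
  refine (range (2 * (a * b)) ×ˢ range (2 * (a * b))).finite_toSet.subset fun p hp => ?_
  have hy := (isSolutionData_of_mem ha hb hp).two_mul_mul_lt hp.1
  have hk := Nat.mul_le_mul_right p.2 (isSolutionData_of_mem ha hb hp).k_pos
  have hxy := hp.2.1
  simp only [coe_product, coe_range, Set.mem_prod, Set.mem_Iio]
  omega

def divisorPairs (n E K : ℕ) : Finset (ℕ × ℕ) :=
  {q ∈ Icc 1 E ×ˢ Icc 1 K | q.2 ≡ n [MOD q.1]}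

lemma mk_mem_divisorPairs {n K c d k : ℕ} (hcd : c ≤ d) (h : c * d + k = n) (hc : 0 < c)
    (hk : 0 < k) (hkK : k ≤ K) : (c, k) ∈ divisorPairs n (Nat.sqrt (n - 1)) K := by
  simp only [divisorPairs, mem_filter, mem_product, mem_Icc]
  refine ⟨⟨⟨hc, Nat.le_sqrt.2 ?_⟩, hk, hkK⟩,
    (Nat.modEq_iff_dvd' (by omega)).2 ⟨d, by omega⟩⟩
  have := Nat.mul_le_mul_left c hcd
  omega

lemma card_divisorPairs_le (n E K : ℕ) (hK : 1 ≤ K) :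
    (#(divisorPairs n E K) : ℝ) ≤ (K - 1) * harmonic E + E := by
  have hcount : #(divisorPairs n E K) = ∑ e ∈ Icc 1 E, #{k ∈ Icc 1 K | k ≡ n [MOD e]} := by
    rw [divisorPairs, card_filter, sum_product]
    simp only [card_filter]
  have hterm : ∀ e ∈ Icc 1 E,
      (#{k ∈ Icc 1 K | k ≡ n [MOD e]} : ℝ) ≤ (K - 1) * (e : ℝ)⁻¹ + 1 := by
    intro e he
    have he : 0 < e := (mem_Icc.1 he).1
    have h := Nat.Icc_filter_modEq_card_le 1 K n he
    calc (#{k ∈ Icc 1 K | k ≡ n [MOD e]} : ℝ)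
        ≤ ((K - 1) / e : ℕ) + 1 := by exact_mod_cast h
      _ ≤ (K - 1) * (e : ℝ)⁻¹ + 1 := by
        grw [Nat.cast_div_le]
        rw [Nat.cast_sub hK, Nat.cast_one, div_eq_mul_inv]
  rw [hcount, Nat.cast_sum]
  grw [sum_le_sum hterm]
  rw [sum_add_distrib, ← mul_sum, harmonic_eq_sum_Icc]
  simp

lemma card_filter_multiplier_le_le (ha : 0 < a) (hb : 0 < b) (T : Finset (ℕ × ℕ))
    (hT : ∀ p ∈ T, p ∈ solutions a b) (K : ℕ) :
    #{p ∈ T | multiplier a b p ≤ K} ≤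
      2 * #(divisorPairs (a * b) (Nat.sqrt (a * b - 1)) K) := by
  set T₁ := {p ∈ T | multiplier a b p ≤ K}
  have hdata : ∀ p ∈ T₁, IsSolutionData a b p.1 p.2 (multiplier a b p) (cofactorFst a b p)
      (cofactorSnd a b p) ∧ multiplier a b p ≤ K := fun p hp =>
    ⟨isSolutionData_of_mem ha hb (hT p (mem_filter.1 hp).1), (mem_filter.1 hp).2⟩
  -- a solution is determined by its multiplier and its smaller cofactor
  have hfst : #{p ∈ T₁ | cofactorFst a b p ≤ cofactorSnd a b p} ≤
      #(divisorPairs (a * b) (Nat.sqrt (a * b - 1)) K) := by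
    refine card_le_card_of_injOn (fun p => (cofactorFst a b p, multiplier a b p)) ?_ ?_
    · intro p hp
      obtain ⟨hp, hcd⟩ := mem_filter.1 hp
      obtain ⟨h, hK⟩ := hdata p hp
      exact mk_mem_divisorPairs hcd h.mul_add h.c_pos h.k_pos hK
    · intro p hp q hq hpq
      simp only [Prod.mk.injEq] at hpq
      have hq := (hdata q (mem_filter.1 hq).1).1
      rw [← hpq.2] at hq
      obtain ⟨hx, hy⟩ := (hdata p (mem_filter.1 hp).1).1.eq_of_eq hq (Or.inl hpq.1)
      exact Prod.ext hx hy
  have hsnd : #{p ∈ T₁ | ¬cofactorFst a b p ≤ cofactorSnd a b p} ≤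
      #(divisorPairs (a * b) (Nat.sqrt (a * b - 1)) K) := by
    refine card_le_card_of_injOn (fun p => (cofactorSnd a b p, multiplier a b p)) ?_ ?_
    · intro p hp
      obtain ⟨hp, hcd⟩ := mem_filter.1 hp
      obtain ⟨h, hK⟩ := hdata p hp
      exact mk_mem_divisorPairs (le_of_not_ge hcd) (by rw [mul_comm]; exact h.mul_add) h.d_pos
        h.k_pos hK
    · intro p hp q hq hpq
      simp only [Prod.mk.injEq] at hpq
      have hq := (hdata q (mem_filter.1 hq).1).1
      rw [← hpq.2] at hq
      obtain ⟨hx, hy⟩ := (hdata p (mem_filter.1 hp).1).1.eq_of_eq hq (Or.inr hpq.1)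
      exact Prod.ext hx hy
  rw [← card_filter_add_card_filter_not (fun p => cofactorFst a b p ≤ cofactorSnd a b p)]
  omega

lemma card_filter_lt_multiplier_le (ha : 0 < a) (hb : 0 < b) (T : Finset (ℕ × ℕ))
    (hT : ∀ p ∈ T, p ∈ solutions a b) (K : ℕ) :
    #{p ∈ T | K < multiplier a b p} ≤ (2 * (a * b) - 1) / (2 * K + 1) := by
  have hdata : ∀ p ∈ ({p ∈ T | K < multiplier a b p} : Finset _), p ∈ solutions a b ∧
      IsSolutionData a b p.1 p.2 (multiplier a b p) (cofactorFst a b p) (cofactorSnd a b p) ∧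
      K < multiplier a b p := fun p hp =>
    ⟨hT p (mem_filter.1 hp).1, isSolutionData_of_mem ha hb (hT p (mem_filter.1 hp).1),
      (mem_filter.1 hp).2⟩
  -- the second coordinate is bounded, and determines the first as an inverse of `a` modulo it
  calc #{p ∈ T | K < multiplier a b p}
      ≤ #(Icc 1 ((2 * (a * b) - 1) / (2 * K + 1))) := by
        refine card_le_card_of_injOn Prod.snd (fun p hp => ?_) fun p hp q hq hpq => ?_
        · obtain ⟨hp, h, hK⟩ := hdata p hp
          have hy := h.two_mul_mul_lt hp.1
          have : (K + 1) * p.2 ≤ multiplier a b p * p.2 := Nat.mul_le_mul_right _ hK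
          rw [mem_coe, mem_Icc, Nat.le_div_iff_mul_le (by omega)]
          exact ⟨by linarith [hp.1, hp.2.1], Nat.le_sub_one_of_lt (by linarith)⟩
        · obtain ⟨hp, h, -⟩ := hdata p hp
          obtain ⟨hq, h', -⟩ := hdata q hq
          have hpq : p.2 = q.2 := hpq
          have hq₁ := h'.snd_mul_add_one
          have hq₂ := hq.2.1
          rw [← hpq] at hq₁ hq₂
          exact Prod.ext (Nat.eq_of_mul_add_one_eq_of_lt h.snd_mul_add_one hq₁ hp.2.1 hq₂) hpq
    _ = (2 * (a * b) - 1) / (2 * K + 1) := by simp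

lemma card_solutions_le (ha : 0 < a) (hb : 0 < b) {K : ℕ} (hK : 1 ≤ K) :
    (Nat.card (solutions a b) : ℝ) ≤
      2 * ((K - 1) * harmonic (Nat.sqrt (a * b - 1)) + Nat.sqrt (a * b - 1)) +
        ((2 * (a * b) - 1) / (2 * K + 1) : ℕ) := by
  set T := (solutions_finite ha hb).toFinset
  have hT : ∀ p ∈ T, p ∈ solutions a b := fun p hp => (Set.Finite.mem_toFinset _).1 hp
  have hsplit : Nat.card (solutions a b) =
      #{p ∈ T | multiplier a b p ≤ K} + #{p ∈ T | K < multiplier a b p} := by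
    simp_rw [← not_le]
    rw [card_filter_add_card_filter_not, Nat.card_coe_set_eq,
      Set.ncard_eq_toFinset_card _ (solutions_finite ha hb)]
  have h₁ := card_filter_multiplier_le_le ha hb T hT K
  have h₂ := card_filter_lt_multiplier_le ha hb T hT K
  have h₃ := card_divisorPairs_le (a * b) (Nat.sqrt (a * b - 1)) K hK
  rw [hsplit]
  push_cast
  have h₁' : (#{p ∈ T | multiplier a b p ≤ K} : ℝ) ≤
      2 * #(divisorPairs (a * b) (Nat.sqrt (a * b - 1)) K) := by exact_mod_cast h₁
  have h₂' : (#{p ∈ T | K < multiplier a b p} : ℝ) ≤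
      ((2 * (a * b) - 1) / (2 * K + 1) : ℕ) := by
    exact_mod_cast h₂
  linarith

end Rho

/-- Theorem 1: For fixed positive integers `a, b` with `ab = n > 1`,
the number `ρ(a,b)` of pairs `(x, y)` of integers with `1 < x < y` and
`xy ∣ ax + by - 1` satisfies, for every real `1 ≤ α ≤ √n`,
`ρ(a,b) < (1/α)·√n·log n + 2·(1 + 0.6/α)·√n + (2n-1)·α/(2√n - α)`. -/
theorem rho_bound (n a b : ℕ) (ha : 0 < a) (hb : 0 < b) (hab : a * b = n)
    (hn : 1 < n) (α : ℝ) (hα1 : 1 ≤ α) (hα2 : α ≤ Real.sqrt n) :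
    (Nat.card {p : ℕ × ℕ | 1 < p.1 ∧ p.1 < p.2 ∧ p.1 * p.2 ∣ a * p.1 + b * p.2 - 1} : ℝ) <
      (1 / α) * Real.sqrt n * Real.log n + 2 * (1 + 0.6 / α) * Real.sqrt n +
        (2 * (n : ℝ) - 1) * α / (2 * Real.sqrt n - α) := by
  have hα : 0 < α := by linarith
  set K := ⌊√n / α⌋₊
  have hK : 1 ≤ K := Nat.le_floor (by rwa [Nat.cast_one, one_le_div hα])
  have hKs : (K : ℝ) ≤ √n / α := Nat.floor_le (by positivity)
  set E := Nat.sqrt (n - 1)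
  have hE : 1 ≤ E := Nat.sqrt_pos.2 (by omega)
  have hEs : (E : ℝ) < √n := by
    rw [Real.lt_sqrt E.cast_nonneg]
    exact_mod_cast (Nat.sqrt_le' (n - 1)).trans_lt (by omega)
  have hcount := Rho.card_solutions_le ha hb hK
  rw [hab] at hcount
  have hharm := sub_one_mul_harmonic_le hK hKs hE hEs.le hα1
  have hquot := natCast_div_two_mul_floor_add_one_lt (m := 2 * n - 1) (by omega) hα hα2
  rw [Nat.cast_sub (by omega)] at hquot
  push_cast at hquot
  have hrhs : (1 / α) * √n * Real.log n + 2 * (1 + 0.6 / α) * √n =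
      2 * (√n / α * (Real.log √n + 3 / 5)) + 2 * √n := by
    rw [Real.log_sqrt (by positivity)]
    field_simp
    norm_num
    ring
  change (Nat.card (Rho.solutions a b) : ℝ) < _
  rw [hrhs]
  linarith
end

section
/- Let a, b be positive integers. The congruence ax + by ≡ 1 (mod xy) has infinitely many solutions in positive integers (x, y) if and only if a = 1 or b = 1. -/
/-- Bound lemma: if `a, b ≥ 2` and `(x, y)` is a positive solution of
`x*y ∣ a*x + b*y - 1` (over ℤ), then `x` and `y` are bounded by `a*b + a + b`. -/
lemma solution_bound (a b x y : ℤ) (ha : 2 ≤ a) (hb : 2 ≤ b) (hx : 1 ≤ x) (hy : 1 ≤ y)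
    (h1 : x ≤ b * y - 1) (h2 : y ≤ a * x - 1) (h3 : x * y ≤ a * x + b * y - 1) :
    x ≤ a * b + a + b ∧ y ≤ a * b + a + b := by
  rcases le_or_gt x b with hxb | hxb
  · constructor
    · nlinarith
    · nlinarith
  · rcases le_or_gt y a with hya | hya
    · constructor
      · nlinarith
      · nlinarith
    · constructor
      · nlinarith [mul_nonneg (by linarith : (0:ℤ) ≤ x - b) (by linarith : (0:ℤ) ≤ y - a - 1)]
      · nlinarith [mul_nonneg (by linarith : (0:ℤ) ≤ x - b - 1) (by linarith : (0:ℤ) ≤ y - a)]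

/-- Proposition 1: For positive integers `a, b`, the congruence
`ax + by ≡ 1 (mod xy)` has infinitely many solutions in positive integers `(x, y)`
if and only if `a = 1` or `b = 1`. -/
theorem infinitely_many_solutions_iff (a b : ℕ) (ha : 0 < a) (hb : 0 < b) :
    {p : ℕ × ℕ | 0 < p.1 ∧ 0 < p.2 ∧ p.1 * p.2 ∣ a * p.1 + b * p.2 - 1}.Infinite ↔
      a = 1 ∨ b = 1 := by
  constructor
  · -- forward: contrapositive, if a ≥ 2 and b ≥ 2 the set is finite
    intro hinf
    by_contra hab
    push_neg at hab
    obtain ⟨ha1, hb1⟩ := hab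
    have ha2 : 2 ≤ a := by omega
    have hb2 : 2 ≤ b := by omega
    apply Set.not_infinite.mpr _ hinf
    set N : ℕ := a * b + a + b + 1 with hN
    apply Set.Finite.subset ((Set.finite_Iio N).prod (Set.finite_Iio N))
    rintro ⟨x, y⟩ ⟨hx, hy, hd⟩
    simp only [Set.mem_prod, Set.mem_Iio]
    -- move to ℤ
    have hge : 1 ≤ a * x + b * y := by
      have : 1 ≤ a * x := Nat.one_le_iff_ne_zero.mpr (by positivity)
      omega
    have hdZ : (x : ℤ) * y ∣ (a : ℤ) * x + b * y - 1 := by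
      have := Int.natCast_dvd_natCast.mpr hd
      push_cast [Nat.cast_sub hge] at this
      convert this using 1 <;> push_cast <;> ring
    have hxZ : (1 : ℤ) ≤ x := by exact_mod_cast hx
    have hyZ : (1 : ℤ) ≤ y := by exact_mod_cast hy
    have haZ : (2 : ℤ) ≤ a := by exact_mod_cast ha2
    have hbZ : (2 : ℤ) ≤ b := by exact_mod_cast hb2
    have hdx : (x : ℤ) ∣ (b : ℤ) * y - 1 := by
      have h1 : (x : ℤ) ∣ (a : ℤ) * x + b * y - 1 := dvd_trans ⟨y, rfl⟩ hdZ
      have h2 : (x : ℤ) ∣ (a : ℤ) * x := Dvd.intro a (mul_comm _ _)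
      have h3 := dvd_sub h1 h2
      have he : (a : ℤ) * x + b * y - 1 - a * x = b * y - 1 := by ring
      rwa [he] at h3
    have hdy : (y : ℤ) ∣ (a : ℤ) * x - 1 := by
      have h1 : (y : ℤ) ∣ (a : ℤ) * x + b * y - 1 := dvd_trans ⟨x, mul_comm _ _⟩ hdZ
      have h2 : (y : ℤ) ∣ (b : ℤ) * y := Dvd.intro b (mul_comm _ _)
      have h3 := dvd_sub h1 h2
      have he : (a : ℤ) * x + b * y - 1 - b * y = a * x - 1 := by ring
      rwa [he] at h3
    have l1 : (x : ℤ) ≤ b * y - 1 := Int.le_of_dvd (by nlinarith) hdx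
    have l2 : (y : ℤ) ≤ a * x - 1 := Int.le_of_dvd (by nlinarith) hdy
    have l3 : (x : ℤ) * y ≤ a * x + b * y - 1 := Int.le_of_dvd (by nlinarith) hdZ
    obtain ⟨bx, byy⟩ := solution_bound a b x y haZ hbZ hxZ hyZ l1 l2 l3
    constructor
    · have : (x : ℤ) < (N : ℤ) := by rw [hN]; push_cast; linarith
      exact_mod_cast this
    · have : (y : ℤ) < (N : ℤ) := by rw [hN]; push_cast; linarith
      exact_mod_cast this
  · -- backward: exhibit infinitely many solutions
    rintro (rfl | rfl)
    · apply Set.infinite_of_injective_forall_mem (f := fun n : ℕ => ((1 : ℕ), n + 1))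
      · intro m n hmn
        simpa using hmn
      · intro n
        refine ⟨Nat.one_pos, Nat.succ_pos n, ?_⟩
        simp only
        have : 1 * 1 + b * (n + 1) - 1 = b * (n + 1) := by omega
        rw [this]
        simpa using dvd_mul_left (n + 1) b
    · apply Set.infinite_of_injective_forall_mem (f := fun n : ℕ => (n + 1, (1 : ℕ)))
      · intro m n hmn
        simpa using hmn
      · intro n
        refine ⟨Nat.succ_pos n, Nat.one_pos, ?_⟩
        simp only
        have : a * (n + 1) + 1 * 1 - 1 = a * (n + 1) := by omega
        rw [this]
        simpa using dvd_mul_left (n + 1) a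
end

section
/- Fix an integer n > 1. The map sending a quadruple (X, x, Y, y) of positive integers with 1 < x < y satisfying (X + 1/x)(Y + 1/y) = n to the quadruple (x, y, a, b) with a = (yY+1)/x and b = (xX+1)/y is a bijection onto the set of quadruples (x, y, a, b) of positive integers with ab = n, 1 < x < y and ax + by ≡ 1 (mod xy). -/
lemma src_dvd (n X x Y y : ℕ)
    (heq : (X * x + 1) * (Y * y + 1) = n * x * y) :
    x ∣ Y * y + 1 ∧ y ∣ X * x + 1 := by
  have cx : Nat.Coprime x (X * x + 1) := by simp
  have cy : Nat.Coprime y (Y * y + 1) := by simp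
  constructor
  · have h : x ∣ (Y * y + 1) * (X * x + 1) := by
      rw [mul_comm, heq]; exact ⟨n * y, by ring⟩
    exact cx.dvd_of_dvd_mul_right h
  · have h : y ∣ (X * x + 1) * (Y * y + 1) := by
      rw [heq]; exact ⟨n * x, by ring⟩
    exact cy.dvd_of_dvd_mul_right h

/-- Theorem 2(a): For a fixed integer `n > 1`, the map sending a
solution `(X, x, Y, y)` (positive integers, `1 < x < y`,
`(Xx + 1)(Yy + 1) = n·x·y`) to `(x, y, a, b)` with `a = (yY + 1)/x` and
`b = (xX + 1)/y` is a bijection onto the set of quadruples `(x, y, a, b)` of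
positive integers with `ab = n`, `1 < x < y` and `xy ∣ ax + by - 1`.
Here a quadruple `q : ℕ × ℕ × ℕ × ℕ` encodes `(X, x, Y, y) = (q.1, q.2.1, q.2.2.1, q.2.2.2)`
in the source and `(x, y, a, b) = (r.1, r.2.1, r.2.2.1, r.2.2.2)` in the target. -/
theorem solutions_equiv_congruences (n : ℕ) (hn : 1 < n) :
    Set.BijOn
      (fun q : ℕ × ℕ × ℕ × ℕ =>
        (q.2.1, q.2.2.2, (q.2.2.2 * q.2.2.1 + 1) / q.2.1, (q.2.1 * q.1 + 1) / q.2.2.2))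
      {q : ℕ × ℕ × ℕ × ℕ | 0 < q.1 ∧ 0 < q.2.2.1 ∧ 1 < q.2.1 ∧ q.2.1 < q.2.2.2 ∧
        (q.1 * q.2.1 + 1) * (q.2.2.1 * q.2.2.2 + 1) = n * q.2.1 * q.2.2.2}
      {r : ℕ × ℕ × ℕ × ℕ | 1 < r.1 ∧ r.1 < r.2.1 ∧ 0 < r.2.2.1 ∧ 0 < r.2.2.2 ∧
        r.2.2.1 * r.2.2.2 = n ∧ r.1 * r.2.1 ∣ r.2.2.1 * r.1 + r.2.2.2 * r.2.1 - 1} := by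
  refine ⟨?_, ?_, ?_⟩
  · -- MapsTo
    rintro ⟨X, x, Y, y⟩ hq
    simp only [Set.mem_setOf_eq] at hq ⊢
    obtain ⟨hX, hY, hx, hxy, heq⟩ := hq
    obtain ⟨hdx, hdy⟩ := src_dvd n X x Y y heq
    have hx0 : 0 < x := by omega
    have hy0 : 0 < y := by omega
    set a := (y * Y + 1) / x with ha
    set b := (x * X + 1) / y with hb
    have hdx' : x ∣ y * Y + 1 := by rwa [mul_comm y Y]
    have hdy' : y ∣ x * X + 1 := by rwa [mul_comm x X]
    have hax : a * x = y * Y + 1 := Nat.div_mul_cancel hdx'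
    have hby : b * y = x * X + 1 := Nat.div_mul_cancel hdy'
    have ha0 : 0 < a := by
      rcases Nat.eq_zero_or_pos a with h | h
      · simp [h] at hax
      · exact h
    have hb0 : 0 < b := by
      rcases Nat.eq_zero_or_pos b with h | h
      · simp [h] at hby
      · exact h
    have hab : a * b = n := by
      have h : (a * b) * (x * y) = n * (x * y) := by
        calc (a * b) * (x * y) = (a * x) * (b * y) := by ring
          _ = (y * Y + 1) * (x * X + 1) := by rw [hax, hby]
          _ = (X * x + 1) * (Y * y + 1) := by ring
          _ = n * (x * y) := by rw [heq]; ring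
      exact Nat.eq_of_mul_eq_mul_right (by positivity) h
    have hcop : Nat.Coprime x y := by
      have h1 : Nat.gcd x y ∣ y * Y := (Nat.gcd_dvd_right x y).mul_right Y
      have h2 : Nat.gcd x y ∣ y * Y + 1 := (Nat.gcd_dvd_left x y).trans hdx'
      have h3 : Nat.gcd x y ∣ 1 := by
        have := Nat.dvd_sub h2 h1
        simpa using this
      exact Nat.dvd_one.mp h3
    refine ⟨hx, hxy, ha0, hb0, hab, ?_⟩
    have hxd : x ∣ a * x + b * y - 1 := by
      have h : a * x + b * y - 1 = a * x + x * X := by rw [hby]; omega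
      exact ⟨a + X, by rw [h]; ring⟩
    have hyd : y ∣ a * x + b * y - 1 := by
      have h : a * x + b * y - 1 = y * Y + b * y := by rw [hax]; omega
      exact ⟨Y + b, by rw [h]; ring⟩
    exact hcop.mul_dvd_of_dvd_of_dvd hxd hyd
  · -- InjOn
    rintro ⟨X1, x1, Y1, y1⟩ h1 ⟨X2, x2, Y2, y2⟩ h2 hf
    simp only [Set.mem_setOf_eq] at h1 h2
    obtain ⟨hX1, hY1, hx1, hxy1, heq1⟩ := h1
    obtain ⟨hX2, hY2, hx2, hxy2, heq2⟩ := h2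
    simp only [Prod.mk.injEq] at hf
    obtain ⟨hxx, hyy, hA, hB⟩ := hf
    subst hxx; subst hyy
    obtain ⟨hd1x, hd1y⟩ := src_dvd n X1 x1 Y1 y1 heq1
    obtain ⟨hd2x, hd2y⟩ := src_dvd n X2 x1 Y2 y1 heq2
    have hd1x' : x1 ∣ y1 * Y1 + 1 := by rwa [mul_comm y1 Y1]
    have hd2x' : x1 ∣ y1 * Y2 + 1 := by rwa [mul_comm y1 Y2]
    have hd1y' : y1 ∣ x1 * X1 + 1 := by rwa [mul_comm x1 X1]
    have hd2y' : y1 ∣ x1 * X2 + 1 := by rwa [mul_comm x1 X2]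
    have e1 : y1 * Y1 + 1 = y1 * Y2 + 1 := by
      have := congrArg (· * x1) hA
      simpa [Nat.div_mul_cancel hd1x', Nat.div_mul_cancel hd2x'] using this
    have e2 : x1 * X1 + 1 = x1 * X2 + 1 := by
      have := congrArg (· * y1) hB
      simpa [Nat.div_mul_cancel hd1y', Nat.div_mul_cancel hd2y'] using this
    have hYe : Y1 = Y2 := Nat.eq_of_mul_eq_mul_left (by omega : 0 < y1) (Nat.add_right_cancel e1)
    have hXe : X1 = X2 := Nat.eq_of_mul_eq_mul_left (by omega : 0 < x1) (Nat.add_right_cancel e2)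
    simp [hXe, hYe]
  · -- SurjOn
    rintro ⟨x, y, a, b⟩ hr
    simp only [Set.mem_setOf_eq] at hr
    obtain ⟨hx, hxy, ha, hb, hab, hdvd⟩ := hr
    have hx0 : 0 < x := by omega
    have hy0 : 0 < y := by omega
    have hby1 : 1 < b * y := lt_of_lt_of_le (hx.trans hxy) (Nat.le_mul_of_pos_left y hb)
    have hax1 : 1 < a * x := lt_of_lt_of_le hx (Nat.le_mul_of_pos_left x ha)
    have hxd : x ∣ b * y - 1 := by
      have h1 : x ∣ a * x + b * y - 1 := (dvd_mul_right x y).trans hdvd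
      have h2 : x ∣ a * x := dvd_mul_left x a
      have h3 := Nat.dvd_sub h1 h2
      have heq : a * x + b * y - 1 - a * x = b * y - 1 := by omega
      rwa [heq] at h3
    have hyd : y ∣ a * x - 1 := by
      have h1 : y ∣ a * x + b * y - 1 := (dvd_mul_left y x).trans hdvd
      have h2 : y ∣ b * y := dvd_mul_left y b
      have h3 := Nat.dvd_sub h1 h2
      have heq : a * x + b * y - 1 - b * y = a * x - 1 := by omega
      rwa [heq] at h3
    have hX : (b * y - 1) / x * x = b * y - 1 := Nat.div_mul_cancel hxd
    have hY : (a * x - 1) / y * y = a * x - 1 := Nat.div_mul_cancel hyd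
    refine ⟨⟨(b * y - 1) / x, x, (a * x - 1) / y, y⟩, ⟨?_, ?_, hx, hxy, ?_⟩, ?_⟩
    · exact Nat.div_pos (Nat.le_of_dvd (by omega) hxd) hx0
    · exact Nat.div_pos (Nat.le_of_dvd (by omega) hyd) hy0
    · show ((b * y - 1) / x * x + 1) * ((a * x - 1) / y * y + 1) = n * x * y
      have e1 : (b * y - 1) / x * x + 1 = b * y := by omega
      have e2 : (a * x - 1) / y * y + 1 = a * x := by omega
      calc ((b * y - 1) / x * x + 1) * ((a * x - 1) / y * y + 1)
          = (b * y) * (a * x) := by rw [e1, e2]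
        _ = (a * b) * x * y := by ring
        _ = n * x * y := by rw [hab]
    · show (x, y, (y * ((a * x - 1) / y) + 1) / x, (x * ((b * y - 1) / x) + 1) / y)
        = (x, y, a, b)
      have l1 : (y * ((a * x - 1) / y) + 1) / x = a := by
        have e : y * ((a * x - 1) / y) + 1 = a * x := by rw [mul_comm y]; omega
        rw [e, Nat.mul_div_cancel a hx0]
      have l2 : (x * ((b * y - 1) / x) + 1) / y = b := by
        have e : x * ((b * y - 1) / x) + 1 = b * y := by rw [mul_comm x]; omega
        rw [e, Nat.mul_div_cancel b hy0]
      rw [l1, l2]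
end

section
/- Let (X, x, Y, y) be a quadruple of positive integers with x > 1, y > 1 satisfying (X + 1/x)(Y + 1/y) = n for an integer n > 1. Then the solution is reduced (i.e. X < y and Y < x) if and only if XY = n − 1. -/
/-- Proposition 2: A solution `(X, x, Y, y)` in positive integers
with `x, y > 1` to `(X + 1/x)(Y + 1/y) = n` (with `n > 1`) is reduced
(i.e. `X < y` and `Y < x`) if and only if `XY = n - 1`. -/
theorem reduced_iff (n X x Y y : ℕ) (hn : 1 < n)
    (hX : 0 < X) (hY : 0 < Y) (hx : 1 < x) (hy : 1 < y)
    (heq : (X * x + 1) * (Y * y + 1) = n * x * y) :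
    (X < y ∧ Y < x) ↔ X * Y = n - 1 := by
  have hlt : X * Y < n := by
    have h1 : X * Y * (x * y) < n * (x * y) := by nlinarith
    exact Nat.lt_of_mul_lt_mul_right h1
  obtain ⟨k, hk⟩ : ∃ k, n = X * Y + k + 1 := ⟨n - X * Y - 1, by omega⟩
  subst hk
  have key : X * x + Y * y + 1 = (k + 1) * (x * y) := by nlinarith
  constructor
  · rintro ⟨h1, h2⟩
    have hk0 : k = 0 := by
      by_contra h
      have hk1 : 1 ≤ k := by omega
      nlinarith [Nat.mul_le_mul_right x h1, Nat.mul_le_mul_right y h2, Nat.mul_le_mul_right (x*y) hk1]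
    omega
  · intro h
    have hk0 : k = 0 := by omega
    subst hk0
    constructor
    · by_contra h'
      have : y ≤ X := by omega
      nlinarith [Nat.mul_le_mul_right x this]
    · by_contra h'
      have : x ≤ Y := by omega
      nlinarith [Nat.mul_le_mul_right y this]
end

section
/- For every integer n > 1, the number of reduced solutions (X, x, Y, y) with 1 < x < y to the equation (X + 1/x)(Y + 1/y) = n equals (1/2)·θ(n)·θ(n−1). -/
private lemma aux_ne (n X Y k m : ℕ) (hn : 1 < n) (hXY : X * Y + 1 = n) (hkm : k * m = n)
    (hX : 0 < X) (hY : 0 < Y) : Y + k ≠ X + m := by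
  intro h
  have hk : 0 < k := by
    rcases Nat.eq_zero_or_pos k with h0 | h0
    · rw [h0] at hkm; simp at hkm; omega
    · exact h0
  have hm : 0 < m := by
    rcases Nat.eq_zero_or_pos m with h0 | h0
    · rw [h0] at hkm; simp at hkm; omega
    · exact h0
  have hXY' : (X : ℤ) * Y + 1 = n := by exact_mod_cast hXY
  have hkm' : (k : ℤ) * m = n := by exact_mod_cast hkm
  have h' : (Y : ℤ) + k = X + m := by exact_mod_cast h
  have hd : ((m : ℤ) - Y) * ((X : ℤ) + m) = 1 := by nlinarith [hXY', hkm', h']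
  have hX' : (1:ℤ) ≤ X := by exact_mod_cast hX
  have hY' : (1:ℤ) ≤ Y := by exact_mod_cast hY
  have hm' : (1:ℤ) ≤ m := by exact_mod_cast hm
  rcases le_or_gt (m : ℤ) (Y : ℤ) with hle | hlt
  · nlinarith
  · nlinarith

/-- Backward direction: every reduced solution comes from a divisor pair. -/
private lemma aux_back (n X x Y y : ℕ) (hn : 1 < n) (hX : 0 < X) (hY : 0 < Y) (hx : 1 < x)
    (hxy : x < y) (heq : (X * x + 1) * (Y * y + 1) = n * x * y) (hXy : X < y) (hYx : Y < x) :
    ∃ k m, k * m = n ∧ X * Y + 1 = n ∧ x = Y + k ∧ y = X + m := by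
  have hdy : y ∣ X * x + 1 := by
    have hcop : Nat.Coprime (Y * y + 1) y := by
      rw [mul_comm]
      exact (Nat.coprime_mul_left_add_left 1 y Y).mpr (Nat.coprime_one_left y)
    have hd : y ∣ (X * x + 1) * (Y * y + 1) := ⟨n * x, by rw [heq]; ring⟩
    exact Nat.Coprime.dvd_of_dvd_mul_right hcop.symm hd
  have hdx : x ∣ Y * y + 1 := by
    have hcop : Nat.Coprime (X * x + 1) x := by
      rw [mul_comm]
      exact (Nat.coprime_mul_left_add_left 1 x X).mpr (Nat.coprime_one_left x)
    have hd : x ∣ (X * x + 1) * (Y * y + 1) := ⟨n * y, by rw [heq]; ring⟩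
    exact Nat.Coprime.dvd_of_dvd_mul_left hcop.symm hd
  obtain ⟨k, hk⟩ := hdy
  obtain ⟨m, hm⟩ := hdx
  have hk0 : 0 < k := by
    rcases Nat.eq_zero_or_pos k with h0 | h0
    · subst h0; simp at hk
    · exact h0
  have hm0 : 0 < m := by
    rcases Nat.eq_zero_or_pos m with h0 | h0
    · subst h0; simp at hm
    · exact h0
  have hkm : k * m = n := by
    have hxy0 : 0 < x * y := Nat.mul_pos (by omega) (by omega)
    have h2 : (k * m) * (x * y) = n * (x * y) := by
      have h3 := heq
      rw [hk, hm] at h3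
      ring_nf at h3 ⊢
      linarith [h3]
    exact Nat.eq_of_mul_eq_mul_right hxy0 h2
  have hk' : (X : ℤ) * x + 1 = y * k := by exact_mod_cast hk
  have hm' : (Y : ℤ) * y + 1 = x * m := by exact_mod_cast hm
  have hkm' : (k : ℤ) * m = n := by exact_mod_cast hkm
  have hx' : (2:ℤ) ≤ x := by exact_mod_cast hx
  have hxyZ : (x:ℤ) < y := by exact_mod_cast hxy
  have hX' : (1:ℤ) ≤ X := by exact_mod_cast hX
  have hY' : (1:ℤ) ≤ Y := by exact_mod_cast hY
  have hXy' : (X:ℤ) < y := by exact_mod_cast hXy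
  have hYx' : (Y:ℤ) < x := by exact_mod_cast hYx
  have hk0' : (1:ℤ) ≤ k := by exact_mod_cast hk0
  have hm0' : (1:ℤ) ≤ m := by exact_mod_cast hm0
  have hint1 : (0:ℤ) ≤ ((y:ℤ) - 1 - X) * x := by
    have h1 : (0:ℤ) ≤ (y:ℤ) - 1 - X := by linarith
    have h2 : (0:ℤ) ≤ (x:ℤ) := by linarith
    positivity
  have hint2 : (0:ℤ) ≤ ((x:ℤ) - 1 - Y) * y := by
    have h1 : (0:ℤ) ≤ (x:ℤ) - 1 - Y := by linarith
    have h2 : (0:ℤ) ≤ (y:ℤ) := by linarith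
    positivity
  have hr1 : ((y:ℤ) - 1 - X) * x = y*x - x - X*x := by ring
  have hint1' : (0:ℤ) ≤ (y:ℤ)*x - x - X*x := by linarith [hint1, hr1]
  have hr2 : ((x:ℤ) - 1 - Y) * y = x*y - y - Y*y := by ring
  have hint2' : (0:ℤ) ≤ (x:ℤ)*y - y - Y*y := by linarith [hint2, hr2]
  have heq' : ((X:ℤ) * x + 1) * ((Y:ℤ) * y + 1) = n * x * y := by exact_mod_cast heq
  have hxy0' : (0:ℤ) < x * y := mul_pos (by linarith) (by linarith)
  have e : ((n:ℤ) - X*Y) * (x*y) = X*x + Y*y + 1 := by linear_combination -heq'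
  have hXx : (0:ℤ) ≤ (X:ℤ)*x := by positivity
  have hYy : (0:ℤ) ≤ (Y:ℤ)*y := by positivity
  have hlow : (X:ℤ) * Y < n := by
    by_contra hc
    push_neg at hc
    have hnp : ((n:ℤ) - X*Y) * (x*y) ≤ 0 :=
      mul_nonpos_of_nonpos_of_nonneg (by linarith) (le_of_lt hxy0')
    linarith [e, hnp]
  have hcomm : (y:ℤ)*x = x*y := by ring
  have h2 : ((n:ℤ) - X*Y) * (x*y) < 2 * (x*y) := by
    linarith [e, hint1', hint2', hcomm, hx', hxyZ]
  have hhigh : (n:ℤ) < X * Y + 2 := by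
    by_contra hc
    push_neg at hc
    have h3 : 2 * ((x:ℤ)*y) ≤ ((n:ℤ) - X*Y) * (x*y) :=
      mul_le_mul_of_nonneg_right (by linarith) (le_of_lt hxy0')
    linarith [h2, h3]
  have hXYZ : (X:ℤ) * Y + 1 = n := by
    have : (X:ℤ)*Y < n ∧ (n:ℤ) < X*Y + 2 := ⟨hlow, hhigh⟩
    omega
  have hXY : X * Y + 1 = n := by exact_mod_cast hXYZ
  have hy' : (y:ℤ) = X + m := by
    linear_combination (-(m:ℤ)) * hk' - (X:ℤ) * hm' - (y:ℤ) * hkm' + (y:ℤ) * hXYZ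
  have hx'' : (x:ℤ) = Y + k := by
    linear_combination (-(k:ℤ)) * hm' - (Y:ℤ) * hk' - (x:ℤ) * hkm' + (x:ℤ) * hXYZ
  exact ⟨k, m, hkm, hXY, by exact_mod_cast hx'', by exact_mod_cast hy'⟩

/-- Divisor data: positivity and complement. -/
private lemma aux_divpair (n d : ℕ) (hn : n ≠ 0) (h : d ∣ n) :
    0 < d ∧ 0 < n / d ∧ d * (n / d) = n ∧ (n - 1+1) = n-1+1 := by
  obtain ⟨e, he⟩ := h
  have hd0 : 0 < d := by
    rcases Nat.eq_zero_or_pos d with h0 | h0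
    · exfalso; rw [h0] at he; simp at he; omega
    · exact h0
  have hdiv : n / d = e := by rw [he, Nat.mul_div_cancel_left _ hd0]
  have he0 : 0 < e := by
    rcases Nat.eq_zero_or_pos e with h0 | h0
    · exfalso; rw [h0] at he; simp at he; omega
    · exact h0
  exact ⟨hd0, by omega, by rw [hdiv]; omega, rfl⟩

/-- Corollary 1: For every integer `n > 1`, the number of reduced
solutions `(X, x, Y, y)` with `1 < x < y` to `(X + 1/x)(Y + 1/y) = n` (a solution
is reduced if `X < y` and `Y < x`) equals `(1/2)·θ(n)·θ(n-1)`. A quadruple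
`q` encodes `(X, x, Y, y) = (q.1, q.2.1, q.2.2.1, q.2.2.2)`. -/
theorem card_reduced_solutions (n : ℕ) (hn : 1 < n) :
    (Nat.card {q : ℕ × ℕ × ℕ × ℕ | 0 < q.1 ∧ 0 < q.2.2.1 ∧ 1 < q.2.1 ∧ q.2.1 < q.2.2.2 ∧
        (q.1 * q.2.1 + 1) * (q.2.2.1 * q.2.2.2 + 1) = n * q.2.1 * q.2.2.2 ∧
        q.1 < q.2.2.2 ∧ q.2.2.1 < q.2.1} : ℝ) =
      (1 / 2) * (n.divisors.card : ℝ) * ((n - 1).divisors.card : ℝ) := by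
  classical
  have hn1' : n - 1 ≠ 0 := by omega
  have hn0 : n ≠ 0 := by omega
  -- the image description of the solution set
  have hset : {q : ℕ × ℕ × ℕ × ℕ | 0 < q.1 ∧ 0 < q.2.2.1 ∧ 1 < q.2.1 ∧ q.2.1 < q.2.2.2 ∧
        (q.1 * q.2.1 + 1) * (q.2.2.1 * q.2.2.2 + 1) = n * q.2.1 * q.2.2.2 ∧
        q.1 < q.2.2.2 ∧ q.2.2.1 < q.2.1} =
      ↑((((n-1).divisors ×ˢ n.divisors).filter
          (fun q : ℕ × ℕ => (n-1)/q.1 + q.2 < q.1 + n/q.2)).image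
        (fun q : ℕ × ℕ => (q.1, (n-1)/q.1 + q.2, (n-1)/q.1, q.1 + n/q.2))) := by
    ext ⟨X, x, Y, y⟩
    simp only [Set.mem_setOf_eq, Finset.coe_image, Set.mem_image, Finset.mem_coe,
      Finset.mem_filter, Finset.mem_product, Nat.mem_divisors, Prod.ext_iff]
    constructor
    · rintro ⟨h1, h2, h3, h4, h5, h6, h7⟩
      obtain ⟨k, m, hkm, hXY, hx, hy⟩ := aux_back n X x Y y hn h1 h2 h3 h4 h5 h6 h7
      obtain ⟨hk0, hm0, hkmdiv, -⟩ := aux_divpair n k hn0 ⟨m, hkm.symm⟩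
      have hXY2 : X * Y = n - 1 := by omega
      have hdivX : (n - 1) / X = Y := by
        rw [← hXY2, Nat.mul_div_cancel_left _ h1]
      have hdivk : n / k = m := by rw [← hkm, Nat.mul_div_cancel_left _ hk0]
      refine ⟨(X, k), ⟨⟨⟨⟨Y, hXY2.symm⟩, hn1'⟩, ⟨⟨m, hkm.symm⟩, hn0⟩⟩, ?_⟩, ?_⟩
      · show (n - 1) / X + k < X + n / k
        rw [hdivX, hdivk]
        omega
      · refine ⟨rfl, ?_, ?_, ?_⟩
        · show (n - 1) / X + k = x
          rw [hdivX]; omega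
        · show (n - 1) / X = Y
          exact hdivX
        · show X + n / k = y
          rw [hdivk]; omega
    · rintro ⟨⟨A, k⟩, ⟨⟨⟨hXd, -⟩, ⟨hkd, -⟩⟩, hpq⟩, hfq⟩
      obtain ⟨hA0, hB0, hAB, -⟩ := aux_divpair (n-1) A hn1' hXd
      obtain ⟨hk0, hm0, hkm, -⟩ := aux_divpair n k hn0 hkd
      simp only at hpq hfq
      obtain ⟨e1, e2, e3, e4⟩ := hfq
      rw [← e1, ← e2, ← e3, ← e4]
      have hXY' : (A : ℤ) * ((n-1)/A : ℕ) + 1 = n := by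
        have : A * ((n-1)/A) + 1 = n := by omega
        exact_mod_cast this
      have hkm' : (k : ℤ) * ((n/k : ℕ) : ℤ) = n := by exact_mod_cast hkm
      refine ⟨by omega, by omega, by omega, hpq, ?_, by omega, by omega⟩
      have hgoal : ((A:ℤ) * (((n-1)/A : ℕ) + k) + 1) * (((n-1)/A : ℕ) * ((A:ℤ) + (n/k : ℕ)) + 1) =
          n * (((n-1)/A : ℕ) + (k:ℤ)) * ((A:ℤ) + (n/k : ℕ)) := by
        linear_combination ((k:ℤ)*((n/k : ℕ):ℤ) + (A:ℤ)*k + ((n-1)/A : ℕ)*((n/k : ℕ):ℤ)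
          + (A:ℤ)*((n-1)/A : ℕ) + 1) * hXY' - hkm'
      exact_mod_cast hgoal
  rw [hset, Nat.card_coe_set_eq, Set.ncard_coe_finset]
  -- injectivity of the image map
  have hinj : Set.InjOn (fun q : ℕ × ℕ => (q.1, (n-1)/q.1 + q.2, (n-1)/q.1, q.1 + n/q.2))
      ↑((((n-1).divisors ×ˢ n.divisors).filter
          (fun q : ℕ × ℕ => (n-1)/q.1 + q.2 < q.1 + n/q.2))) := by
    intro a _ b _ hab
    simp only [Prod.ext_iff] at hab
    obtain ⟨h1, h2, -⟩ := hab
    rw [h1] at h2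
    exact Prod.ext h1 (by omega)
  rw [Finset.card_image_of_injOn hinj]
  -- distinct sums on divisor pairs
  have hne : ∀ q ∈ (n-1).divisors ×ˢ n.divisors, (n-1)/q.1 + q.2 ≠ q.1 + n/q.2 := by
    rintro ⟨A, k⟩ hq
    simp only [Finset.mem_product, Nat.mem_divisors] at hq
    obtain ⟨⟨hXd, -⟩, ⟨hkd, -⟩⟩ := hq
    obtain ⟨hA0, hB0, hAB, -⟩ := aux_divpair (n-1) A hn1' hXd
    obtain ⟨hk0, hm0, hkm, -⟩ := aux_divpair n k hn0 hkd
    simp only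
    exact aux_ne n A ((n-1)/A) k (n/k) hn (by omega) hkm hA0 hB0
  -- involution between the two halves of divisor pairs
  have hbij : ((((n-1).divisors ×ˢ n.divisors).filter
        (fun q : ℕ × ℕ => ¬ ((n-1)/q.1 + q.2 < q.1 + n/q.2)))).card =
      ((((n-1).divisors ×ˢ n.divisors).filter
        (fun q : ℕ × ℕ => (n-1)/q.1 + q.2 < q.1 + n/q.2))).card := by
    apply Finset.card_bij' (fun q _ => ((n-1)/q.1, n/q.2)) (fun q _ => ((n-1)/q.1, n/q.2))
    · rintro ⟨A, k⟩ hq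
      rw [Finset.mem_filter] at hq ⊢
      obtain ⟨hD', hnp⟩ := hq
      have hD'' := hD'
      simp only [Finset.mem_product, Nat.mem_divisors] at hD''
      obtain ⟨⟨hXd, -⟩, ⟨hkd, -⟩⟩ := hD''
      have hnediff := hne (A, k) hD'
      simp only at hnediff hnp ⊢
      constructor
      · simp only [Finset.mem_product, Nat.mem_divisors]
        exact ⟨⟨Nat.div_dvd_of_dvd hXd, hn1'⟩, ⟨Nat.div_dvd_of_dvd hkd, hn0⟩⟩
      · rw [Nat.div_div_self hXd hn1', Nat.div_div_self hkd hn0]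
        omega
    · rintro ⟨A, k⟩ hq
      rw [Finset.mem_filter] at hq ⊢
      obtain ⟨hD', hlt⟩ := hq
      have hD'' := hD'
      simp only [Finset.mem_product, Nat.mem_divisors] at hD''
      obtain ⟨⟨hXd, -⟩, ⟨hkd, -⟩⟩ := hD''
      simp only at hlt ⊢
      constructor
      · simp only [Finset.mem_product, Nat.mem_divisors]
        exact ⟨⟨Nat.div_dvd_of_dvd hXd, hn1'⟩, ⟨Nat.div_dvd_of_dvd hkd, hn0⟩⟩
      · rw [Nat.div_div_self hXd hn1', Nat.div_div_self hkd hn0]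
        omega
    · rintro ⟨A, k⟩ hq
      rw [Finset.mem_filter] at hq
      have hD'' := hq.1
      simp only [Finset.mem_product, Nat.mem_divisors] at hD''
      obtain ⟨⟨hXd, -⟩, ⟨hkd, -⟩⟩ := hD''
      simp only [Nat.div_div_self hXd hn1', Nat.div_div_self hkd hn0]
    · rintro ⟨A, k⟩ hq
      rw [Finset.mem_filter] at hq
      have hD'' := hq.1
      simp only [Finset.mem_product, Nat.mem_divisors] at hD''
      obtain ⟨⟨hXd, -⟩, ⟨hkd, -⟩⟩ := hD''
      simp only [Nat.div_div_self hXd hn1', Nat.div_div_self hkd hn0]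
  have hsplit := Finset.card_filter_add_card_filter_not
    (s := (n-1).divisors ×ˢ n.divisors)
    (p := fun q : ℕ × ℕ => (n-1)/q.1 + q.2 < q.1 + n/q.2)
  have hDcard : ((n-1).divisors ×ˢ n.divisors).card = (n-1).divisors.card * n.divisors.card :=
    Finset.card_product _ _
  have h2F : 2 * ((((n-1).divisors ×ˢ n.divisors).filter
        (fun q : ℕ × ℕ => (n-1)/q.1 + q.2 < q.1 + n/q.2))).card =
      (n-1).divisors.card * n.divisors.card := by omega
  have hcast := congrArg (fun t : ℕ => (t : ℝ)) h2F
  push_cast at hcast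
  linarith
end

section
/- If p is a prime number, then f(p) < p, where f(p) denotes the number of solutions to equation (1) with parameter p. -/
/-- Structure of a solution: `y = Xx+1` and `Yy+1 = px`, plus the key identity. -/
lemma sol_struct (p X x Y y : ℕ) (hp : p.Prime) (hX : 0 < X) (hY : 0 < Y)
    (hx : 1 < x) (hxy : x < y) (heq : (X*x+1)*(Y*y+1) = p*x*y) :
    ∃ e, 0 < e ∧ X*Y + e = p ∧ y = X*x + 1 ∧ Y*y + 1 = p*x ∧
      X*(e*x) + e = X + p := by
  have hx0 : 0 < x := by omega
  have hy0 : 0 < y := by omega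
  have hdvd : p ∣ (X*x+1)*(Y*y+1) := heq ▸ ⟨x*y, by ring⟩
  have hcase : p ∣ Y*y+1 := by
    rcases (hp.dvd_mul.mp hdvd) with h | h
    · exfalso
      obtain ⟨a, ha⟩ := h
      have h1 : a*(Y*y+1) = x*y := by
        have : p*(a*(Y*y+1)) = p*(x*y) := by rw [← mul_assoc, ← ha]; linarith [heq]
        exact Nat.eq_of_mul_eq_mul_left hp.pos this
      have h2 : (Y*y+1) ∣ x*y := ⟨a, by rw [← h1]; ring⟩
      have hcop : Nat.Coprime (Y*y+1) y := by simp
      have h3 : (Y*y+1) ∣ x := (Nat.Coprime.dvd_of_dvd_mul_right hcop h2)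
      have h4 := Nat.le_of_dvd hx0 h3
      have h5 : y ≤ Y*y := Nat.le_mul_of_pos_left y hY
      omega
    · exact h
  obtain ⟨c, hc⟩ := hcase
  have h1 : (X*x+1)*c = x*y := by
    have : p*((X*x+1)*c) = p*(x*y) := by
      calc p*((X*x+1)*c) = (X*x+1)*(p*c) := by ring
        _ = (X*x+1)*(Y*y+1) := by rw [hc]
        _ = p*x*y := heq
        _ = p*(x*y) := by ring
    exact Nat.eq_of_mul_eq_mul_left hp.pos this
  have hcop : Nat.Coprime (X*x+1) x := by simp
  have h2 : (X*x+1) ∣ y := by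
    have : (X*x+1) ∣ x*y := ⟨c, h1.symm⟩
    exact hcop.dvd_of_dvd_mul_left this
  obtain ⟨m, hm⟩ := h2
  have hm0 : 0 < m := by
    rcases Nat.eq_zero_or_pos m with h | h
    · subst h; simp at hm; omega
    · exact h
  have hcm : c = x*m := by
    have : (X*x+1)*c = (X*x+1)*(x*m) := by rw [h1, hm]; ring
    exact Nat.eq_of_mul_eq_mul_left (by positivity) this
  have hm1 : m = 1 := by
    have hdm : m ∣ 1 := by
      have hd1 : m ∣ Y*y := ⟨Y*(X*x+1), by rw [hm]; ring⟩
      have hd2 : m ∣ Y*y + 1 := by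
        rw [hc, hcm]; exact ⟨p*x, by ring⟩
      exact (Nat.dvd_add_right hd1).mp hd2
    exact Nat.dvd_one.mp hdm
  subst hm1
  have hy : y = X*x + 1 := by rw [hm]; ring
  have hYy : Y*y + 1 = p*x := by rw [hc, hcm]; ring
  have hpy : p*y = X*Y*y + (X + p) := by
    calc p*y = p*(X*x) + p := by rw [hy]; ring
      _ = X*(Y*y+1) + p := by rw [hYy]; ring
      _ = X*Y*y + (X+p) := by ring
  have hXY : X*Y < p := by
    by_contra h
    push_neg at h
    have : p*y ≤ X*Y*y := Nat.mul_le_mul_right y h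
    omega
  refine ⟨p - X*Y, by omega, by omega, hy, hYy, ?_⟩
  have he : (p - X*Y)*y = X + p := by
    have h3 : (p - X*Y)*y = p*y - X*Y*y := by rw [Nat.sub_mul]
    have h4 : X*Y*y ≤ p*y := Nat.mul_le_mul_right y hXY.le
    omega
  have h5 : (p - X*Y)*y = (p-X*Y)*(X*x) + (p-X*Y) := by rw [hy]; ring
  have h6 : X*((p-X*Y)*x) = (p-X*Y)*(X*x) := by ring
  linarith [he, h5, h6]

lemma inj_core (p m X₁ e₁ X₂ e₂ : ℕ) (h₁ : X₁*m + e₁ = X₁ + p) (h₂ : X₂*m + e₂ = X₂ + p)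
    (he₁ : 1 ≤ e₁) (he₂ : 1 ≤ e₂) (hm₁ : 2*e₁ ≤ m) (hm₂ : 2*e₂ ≤ m) : X₁ = X₂ ∧ e₁ = e₂ := by
  have hm2 : 2 ≤ m := by omega
  have main : ∀ A a B b : ℕ, A*m + a = A + p → B*m + b = B + p → 1 ≤ a → 1 ≤ b →
      2*a ≤ m → 2*b ≤ m → ¬ (A < B) := by
    intro A a B b hA hB ha hb hma hmb hlt
    obtain ⟨k, hk, rfl⟩ : ∃ k, 1 ≤ k ∧ B = A + k := ⟨B - A, by omega, by omega⟩
    have hB' : A*m + k*m + b = A + k + p := by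
      have : (A+k)*m = A*m + k*m := by ring
      linarith [hB, this]
    have key : k*m + b = k + a := by linarith [hA, hB']
    have h2k : k*2 ≤ k*m := Nat.mul_le_mul_left k hm2
    have hmk : m ≤ k*m := Nat.le_mul_of_pos_left m (by omega)
    linarith [key, h2k, hmk, ha, hb, hma]
  have h12 := main X₁ e₁ X₂ e₂ h₁ h₂ he₁ he₂ hm₁ hm₂
  have h21 := main X₂ e₂ X₁ e₁ h₂ h₁ he₂ he₁ hm₂ hm₁
  have hXX : X₁ = X₂ := by omega
  subst hXX
  exact ⟨rfl, by linarith [h₁, h₂]⟩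

/-- values: every solution has a well-defined invariant `e*x ∈ [2,p]`. -/
lemma sol_val (p X x Y y : ℕ) (hp : p.Prime) (hX : 0 < X) (hY : 0 < Y)
    (hx : 1 < x) (hxy : x < y) (heq : (X*x+1)*(Y*y+1) = p*x*y) :
    2 ≤ (p - X*Y)*x ∧ (p - X*Y)*x ≤ p := by
  obtain ⟨e, he0, heXY, hy, hYy, hkey⟩ := sol_struct p X x Y y hp hX hY hx hxy heq
  have hem : p - X*Y = e := by omega
  rw [hem]
  constructor
  · calc 2 = 1*2 := by ring
      _ ≤ e*x := Nat.mul_le_mul he0 hx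
  · have hm2 : 2 ≤ e*x := by
      calc 2 = 1*2 := by ring
        _ ≤ e*x := Nat.mul_le_mul he0 hx
    have h1 : X + e*x ≤ X*(e*x) + 1 := by
      obtain ⟨X', rfl⟩ : ∃ X', X = X'+1 := ⟨X-1, by omega⟩
      obtain ⟨m', hm'⟩ : ∃ m', e*x = m'+2 := ⟨e*x-2, by omega⟩
      rw [hm']
      nlinarith
    omega

/-- The number of solutions `(X, x, Y, y)` in positive integers with `1 < x < y`
to `(X + 1/x)(Y + 1/y) = n`, i.e. `(Xx + 1)(Yy + 1) = n·x·y`, where a quadruple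
`q` encodes `(X, x, Y, y) = (q.1, q.2.1, q.2.2.1, q.2.2.2)`. -/
noncomputable def numSolutions (n : ℕ) : ℕ :=
  Nat.card {q : ℕ × ℕ × ℕ × ℕ | 0 < q.1 ∧ 0 < q.2.2.1 ∧ 1 < q.2.1 ∧ q.2.1 < q.2.2.2 ∧
    (q.1 * q.2.1 + 1) * (q.2.2.1 * q.2.2.2 + 1) = n * q.2.1 * q.2.2.2}

/-- Proposition 3: If `p` is a prime, then `f(p) < p`. -/
theorem f_lt_p_of_prime (p : ℕ) (hp : p.Prime) : numSolutions p < p := by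
  have hp2 : 2 ≤ p := hp.two_le
  set S := {q : ℕ × ℕ × ℕ × ℕ | 0 < q.1 ∧ 0 < q.2.2.1 ∧ 1 < q.2.1 ∧ q.2.1 < q.2.2.2 ∧
    (q.1 * q.2.1 + 1) * (q.2.2.1 * q.2.2.2 + 1) = p * q.2.1 * q.2.2.2} with hS
  have hbound : ∀ q : S, 2 ≤ (p - q.1.1*q.1.2.2.1) * q.1.2.1 ∧
      (p - q.1.1*q.1.2.2.1) * q.1.2.1 ≤ p := by
    rintro ⟨⟨X, x, Y, y⟩, hX, hY, hx, hxy, heq⟩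
    exact sol_val p X x Y y hp hX hY hx hxy heq
  set F : S → Fin (p-1) := fun q =>
    ⟨(p - q.1.1*q.1.2.2.1) * q.1.2.1 - 2, by have := hbound q; omega⟩ with hF
  have hinj : Function.Injective F := by
    rintro ⟨⟨X₁, x₁, Y₁, y₁⟩, hq₁⟩ ⟨⟨X₂, x₂, Y₂, y₂⟩, hq₂⟩ hq
    obtain ⟨hX₁, hY₁, hx₁, hxy₁, heq₁⟩ := hq₁
    obtain ⟨hX₂, hY₂, hx₂, hxy₂, heq₂⟩ := hq₂
    have hb₁ := hbound ⟨(X₁, x₁, Y₁, y₁), hX₁, hY₁, hx₁, hxy₁, heq₁⟩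
    have hb₂ := hbound ⟨(X₂, x₂, Y₂, y₂), hX₂, hY₂, hx₂, hxy₂, heq₂⟩
    simp only at hb₁ hb₂
    simp only [hF, Fin.mk.injEq] at hq
    have hmeq : (p - X₁*Y₁) * x₁ = (p - X₂*Y₂) * x₂ := by omega
    obtain ⟨e₁, he₁0, heXY₁, hy₁, hYy₁, hkey₁⟩ := sol_struct p X₁ x₁ Y₁ y₁ hp hX₁ hY₁ hx₁ hxy₁ heq₁
    obtain ⟨e₂, he₂0, heXY₂, hy₂, hYy₂, hkey₂⟩ := sol_struct p X₂ x₂ Y₂ y₂ hp hX₂ hY₂ hx₂ hxy₂ heq₂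
    have hem₁ : p - X₁*Y₁ = e₁ := by omega
    have hem₂ : p - X₂*Y₂ = e₂ := by omega
    rw [hem₁, hem₂] at hmeq
    -- m := e₁ * x₁
    have hk₁ : X₁ * (e₁*x₁) + e₁ = X₁ + p := hkey₁
    have hk₂ : X₂ * (e₁*x₁) + e₂ = X₂ + p := by rw [hmeq]; exact hkey₂
    have hme₁ : 2*e₁ ≤ e₁*x₁ := by
      calc 2*e₁ = e₁*2 := by ring
        _ ≤ e₁*x₁ := Nat.mul_le_mul_left e₁ hx₁
    have hme₂ : 2*e₂ ≤ e₁*x₁ := by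
      rw [hmeq]
      calc 2*e₂ = e₂*2 := by ring
        _ ≤ e₂*x₂ := Nat.mul_le_mul_left e₂ hx₂
    obtain ⟨hXeq, heeq⟩ := inj_core p (e₁*x₁) X₁ e₁ X₂ e₂ hk₁ hk₂ he₁0 he₂0 hme₁ hme₂
    have hxeq : x₁ = x₂ := by
      apply Nat.eq_of_mul_eq_mul_left he₁0
      rw [hmeq, heeq]
    have hyeq : y₁ = y₂ := by rw [hy₁, hy₂, hXeq, hxeq]
    have hYeq : Y₁ = Y₂ := by
      apply Nat.eq_of_mul_eq_mul_right (show 0 < y₂ by rw [hy₂]; omega)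
      rw [hxeq, hyeq] at hYy₁
      linarith [hYy₁, hYy₂]
    simp [hXeq, hxeq, hYeq, hyeq]
  have hcard : numSolutions p ≤ p - 1 := by
    rw [numSolutions]
    simpa using Nat.card_le_card_of_injective F hinj
  omega
end

section
/- Let f(n) denote the number of solutions to equation (1) with parameter n. There exist positive constants C₁ and C₂ such that for all sufficiently large T, C₁·T·(log T)³ < Σ_{n=2}^{⌊T⌋} f(n) < C₂·T·(log T)³. -/
open Finset

namespace NumSolutions

/-! ### Parametrizing the solutions -/

def IsParam (X x d m : ℕ) : Prop := 1 < x ∧ 0 < d ∧ d ≤ X ∧ d ∣ X * x + 1 ∧ d < m * x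

instance (X x d m : ℕ) : Decidable (IsParam X x d m) := by unfold IsParam; infer_instance

def paramValue (X x d m : ℕ) : ℕ := X * (m * x - d) + m

lemma mul_add_one_mul_eq_iff {n X x Y y : ℕ} (hx : 0 < x) (hy : 0 < y) :
    (X * x + 1) * (Y * y + 1) = n * x * y ↔
      ∃ m d, X * Y + m = n ∧ Y + d = m * x ∧ d * y = X * x + 1 := by
  constructor
  · intro h
    have hXY : X * Y ≤ n := by
      refine Nat.le_of_mul_le_mul_right (c := x * y) ?_ (Nat.mul_pos hx hy)
      nlinarith
    obtain ⟨m, rfl⟩ := Nat.exists_eq_add_of_le hXY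
    have hm : m * x * y = X * x + Y * y + 1 := by nlinarith
    obtain ⟨d, hd⟩ := Nat.exists_eq_add_of_le
      (Nat.le_of_mul_le_mul_right (by nlinarith : Y * y ≤ m * x * y) hy)
    exact ⟨m, d, rfl, hd.symm, by nlinarith⟩
  · rintro ⟨m, d, rfl, hd, hdy⟩
    linear_combination y * hd - hdy

lemma isParam_of_solution {n X x Y y : ℕ} (hY : 0 < Y) (hx : 1 < x) (hxy : x < y)
    (h : (X * x + 1) * (Y * y + 1) = n * x * y) :
    IsParam X x ((X * x + 1) / y) (n - X * Y) ∧ paramValue X x ((X * x + 1) / y) (n - X * Y) = n ∧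
      (n - X * Y) * x - (X * x + 1) / y = Y ∧ (X * x + 1) / ((X * x + 1) / y) = y := by
  obtain ⟨m, d, rfl, hd, hdy⟩ := (mul_add_one_mul_eq_iff (by omega) (by omega)).mp h
  have hd_eq : (X * x + 1) / y = d := Nat.div_eq_of_eq_mul_left (by omega) hdy.symm
  have hd_pos : 0 < d := Nat.pos_of_ne_zero (by rintro rfl; omega)
  have hdX : d ≤ X := Nat.le_of_mul_le_mul_right
    (by nlinarith [Nat.mul_lt_mul_of_pos_left hxy hd_pos] : d * x ≤ X * x) (by omega)
  rw [hd_eq, Nat.add_sub_cancel_left,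
    Nat.div_eq_of_eq_mul_right hd_pos (by rw [← hdy, mul_comm])]
  exact ⟨⟨hx, hd_pos, hdX, ⟨y, hdy.symm⟩, by omega⟩,
    by rw [paramValue, show m * x - d = Y by omega], by omega, rfl⟩

lemma solution_of_isParam {X x d m : ℕ} (h : IsParam X x d m) :
    0 < m * x - d ∧ x < (X * x + 1) / d ∧ (X * x + 1) * ((m * x - d) * ((X * x + 1) / d) + 1) =
      paramValue X x d m * x * ((X * x + 1) / d) ∧ paramValue X x d m - X * (m * x - d) = m ∧
      (X * x + 1) / ((X * x + 1) / d) = d := by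
  obtain ⟨hx, hd, hdX, ⟨y, hy⟩, hdm⟩ := h
  have hy_eq : (X * x + 1) / d = y := Nat.div_eq_of_eq_mul_right hd hy
  have hxy : x < y := Nat.lt_of_mul_lt_mul_left
    (by nlinarith [Nat.mul_le_mul_right x hdX] : d * x < d * y)
  rw [hy_eq, Nat.div_eq_of_eq_mul_left (by omega) hy, paramValue, Nat.add_sub_cancel_left,
    mul_add_one_mul_eq_iff (by omega) (by omega)]
  exact ⟨by omega, hxy, ⟨m, d, rfl, by omega, hy.symm⟩, rfl, rfl⟩

lemma IsParam.le_paramValue {X x d m : ℕ} (h : IsParam X x d m) :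
    X ≤ paramValue X x d m ∧ m * x ≤ paramValue X x d m := by
  obtain ⟨-, hd, hdX, -, hdm⟩ := h
  obtain ⟨k, hk⟩ := Nat.exists_eq_add_of_lt hdm
  have hm : 0 < m := Nat.pos_of_ne_zero (by rintro rfl; omega)
  rw [paramValue, hk, show d + k + 1 - d = k + 1 by omega]
  constructor <;> nlinarith

lemma IsParam.two_le_paramValue {X x d m : ℕ} (h : IsParam X x d m) : 2 ≤ paramValue X x d m := by
  obtain ⟨-, hd, hdX, -, hdm⟩ := h
  have hm : 0 < m := Nat.pos_of_ne_zero (by rintro rfl; omega)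
  have : 0 < X * (m * x - d) := Nat.mul_pos (by omega) (by omega)
  rw [paramValue]
  omega

def params (N : ℕ) : Finset (ℕ × ℕ × ℕ × ℕ) :=
  (Icc 1 N ×ˢ Icc 1 N ×ˢ Icc 1 N ×ˢ Icc 1 N).filter
    fun q ↦ IsParam q.1 q.2.1 q.2.2.1 q.2.2.2 ∧ paramValue q.1 q.2.1 q.2.2.1 q.2.2.2 ≤ N

lemma mem_params {N X x d m : ℕ} :
    (X, x, d, m) ∈ params N ↔ IsParam X x d m ∧ paramValue X x d m ≤ N := by
  refine ⟨fun h ↦ (mem_filter.mp h).2, fun h ↦ mem_filter.mpr ⟨?_, h⟩⟩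
  obtain ⟨hXv, hmv⟩ := h.1.le_paramValue
  obtain ⟨⟨hx, hd, hdX, -, hdm⟩, hN⟩ := h
  have hm : 0 < m := Nat.pos_of_ne_zero (by rintro rfl; omega)
  have : x ≤ m * x := Nat.le_mul_of_pos_left x hm
  have : m ≤ m * x := Nat.le_mul_of_pos_right m (by omega)
  simp only [mem_product, mem_Icc]
  omega

lemma numSolutions_eq_card_filter_params {n N : ℕ} (hn : n ≤ N) :
    numSolutions n = #{q ∈ params N | paramValue q.1 q.2.1 q.2.2.1 q.2.2.2 = n} := by
  rw [numSolutions, Nat.card_coe_set_eq, ← Set.ncard_coe_finset]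
  refine Set.BijOn.ncard_eq
    (f := fun q ↦ (q.1, q.2.1, (q.1 * q.2.1 + 1) / q.2.2.2, n - q.1 * q.2.2.1))
    (Set.InvOn.bijOn
      (f' := fun q ↦ (q.1, q.2.1, q.2.2.2 * q.2.1 - q.2.2.1, (q.1 * q.2.1 + 1) / q.2.2.1))
      ⟨?_, ?_⟩ ?_ ?_)
  · rintro ⟨X, x, Y, y⟩ ⟨-, hY, hx, hxy, h⟩
    obtain ⟨-, -, hYeq, hyeq⟩ := isParam_of_solution hY hx hxy h
    simp only [hYeq, hyeq]
  · rintro ⟨X, x, d, m⟩ hq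
    obtain ⟨hmem, rfl⟩ := mem_filter.mp hq
    obtain ⟨hp, -⟩ := mem_params.mp hmem
    obtain ⟨-, -, -, hmeq, hdeq⟩ := solution_of_isParam hp
    simp only [hmeq, hdeq]
  · rintro ⟨X, x, Y, y⟩ ⟨-, hY, hx, hxy, h⟩
    obtain ⟨hp, hval, -⟩ := isParam_of_solution hY hx hxy h
    simp only [coe_filter, Set.mem_ofPred_eq, mem_params]
    exact ⟨⟨hp, hval.le.trans hn⟩, hval⟩
  · rintro ⟨X, x, d, m⟩ hq
    obtain ⟨hmem, rfl⟩ := mem_filter.mp hq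
    obtain ⟨hp, -⟩ := mem_params.mp hmem
    obtain ⟨hY, hxy, h, -⟩ := solution_of_isParam hp
    exact ⟨lt_of_lt_of_le hp.2.1 hp.2.2.1, hY, hp.1, hxy, h⟩

lemma sum_numSolutions_eq_card_params (N : ℕ) :
    ∑ n ∈ Icc 2 N, numSolutions n = #(params N) := by
  rw [card_eq_sum_card_fiberwise (f := fun q ↦ paramValue q.1 q.2.1 q.2.2.1 q.2.2.2) (t := Icc 2 N)]
  · exact sum_congr rfl fun n hn ↦ numSolutions_eq_card_filter_params (mem_Icc.mp hn).2
  · rintro ⟨X, x, d, m⟩ hq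
    obtain ⟨hp, hN⟩ := mem_params.mp hq
    exact mem_Icc.mpr ⟨hp.two_le_paramValue, hN⟩

/-! ### Upper bound -/

lemma card_le_div_of_modEq {α : Type*} {s : Finset α} {f : α → ℕ} {d M : ℕ} (hd : 0 < d)
    (hf : Set.InjOn f s) (hbound : ∀ a ∈ s, d ≤ f a ∧ f a ≤ M)
    (hmod : ∀ a ∈ s, ∀ b ∈ s, f a ≡ f b [MOD d]) : #s ≤ M / d := by
  calc #s ≤ #(Icc 1 (M / d)) := by
        refine card_le_card_of_injOn (fun a ↦ f a / d) (fun a ha ↦ ?_) fun a ha b hb hab ↦ ?_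
        · obtain ⟨hda, haM⟩ := hbound a ha
          exact mem_Icc.mpr ⟨(Nat.le_div_iff_mul_le hd).mpr (by omega), Nat.div_le_div_right haM⟩
        · refine hf ha hb ?_
          rw [← Nat.div_add_mod (f a) d, ← Nat.div_add_mod (f b) d]
          exact congrArg₂ _ (congrArg _ hab) (hmod a ha b hb)
    _ = M / d := by simp

lemma modEq_of_dvd_mul_add_one {d x X X' : ℕ} (h : d ∣ X * x + 1) (h' : d ∣ X' * x + 1) :
    X ≡ X' [MOD d] := by
  have hcop : Nat.Coprime d x := Nat.Coprime.coprime_dvd_left h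
    ((Nat.coprime_mul_right_add_left 1 x X).mpr (Nat.coprime_one_left x))
  refine Nat.ModEq.cancel_right_of_coprime hcop (Nat.ModEq.add_right_cancel' 1 ?_)
  exact (Nat.modEq_zero_iff_dvd.mpr h).trans (Nat.modEq_zero_iff_dvd.mpr h').symm

lemma card_fiber_params_le (N x m d : ℕ) :
    #{q ∈ params N | (q.2.1, q.2.2.2, q.2.2.1) = (x, m, d)} ≤ N / (m * x - d) / d := by
  set F := {q ∈ params N | (q.2.1, q.2.2.2, q.2.2.1) = (x, m, d)}
  have hF : ∀ q ∈ F, q = (q.1, x, d, m) ∧ IsParam q.1 x d m ∧ q.1 * (m * x - d) ≤ N := by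
    rintro ⟨X, x', d', m'⟩ hq
    obtain ⟨hmem, hkey⟩ := mem_filter.mp hq
    simp only [Prod.mk.injEq] at hkey
    obtain ⟨rfl, rfl, rfl⟩ := hkey
    obtain ⟨hp, hN⟩ := mem_params.mp hmem
    exact ⟨rfl, hp, le_trans (Nat.le_add_right _ _) hN⟩
  rcases F.eq_empty_or_nonempty with h | ⟨q₀, hq₀⟩
  · rw [h, card_empty]
    exact Nat.zero_le _
  obtain ⟨-, ⟨-, hd, -, -, hdm⟩, -⟩ := hF q₀ hq₀
  refine card_le_div_of_modEq (f := Prod.fst) hd (fun a ha b hb hab ↦ ?_) (fun a ha ↦ ?_)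
    fun a ha b hb ↦ ?_
  · rw [(hF a ha).1, (hF b hb).1, hab]
  · obtain ⟨-, ⟨-, -, hdX, -, -⟩, hN⟩ := hF a ha
    exact ⟨hdX, (Nat.le_div_iff_mul_le (by omega)).mpr hN⟩
  · obtain ⟨-, ⟨-, -, -, hda, -⟩, -⟩ := hF a ha
    obtain ⟨-, ⟨-, -, -, hdb, -⟩, -⟩ := hF b hb
    exact modEq_of_dvd_mul_add_one hda hdb

lemma sum_inv_mul_sub (k : ℕ) :
    ∑ d ∈ Ico 1 k, ((d : ℝ) * (k - d))⁻¹ = 2 * harmonic (k - 1) / k := by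
  rcases Nat.eq_zero_or_pos k with rfl | hk
  · simp
  have hsplit : ∀ d ∈ Ico 1 k, ((d : ℝ) * (k - d))⁻¹ = ((d : ℝ)⁻¹ + ((k - d : ℕ) : ℝ)⁻¹) / k := by
    intro d hd
    obtain ⟨hd1, hdk⟩ := mem_Ico.mp hd
    have : (0 : ℝ) < d := by exact_mod_cast hd1
    have : (0 : ℝ) < k - d := sub_pos.mpr (by exact_mod_cast hdk)
    rw [Nat.cast_sub hdk.le]
    field_simp
    ring
  have hreflect : ∑ d ∈ Ico 1 k, ((k - d : ℕ) : ℝ)⁻¹ = ∑ d ∈ Ico 1 k, (d : ℝ)⁻¹ := by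
    rw [sum_Ico_reflect (fun d : ℕ ↦ (d : ℝ)⁻¹) 1 k.le_succ, Nat.add_sub_cancel_left,
      Nat.add_sub_cancel]
  have hharm : ∑ d ∈ Ico 1 k, (d : ℝ)⁻¹ = harmonic (k - 1) := by
    obtain ⟨j, rfl⟩ := Nat.exists_eq_add_one_of_ne_zero hk.ne'
    rw [harmonic_eq_sum_Icc, Nat.add_sub_cancel, ← Ico_add_one_right_eq_Icc]
    push_cast
    rfl
  rw [sum_congr rfl hsplit, ← sum_div, sum_add_distrib, hreflect, hharm]
  ring

lemma harmonic_mono : Monotone harmonic := fun m n h ↦ by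
  rw [harmonic_eq_sum_Icc, harmonic_eq_sum_Icc]
  exact sum_le_sum_of_subset_of_nonneg (Icc_subset_Icc_right h) fun _ _ _ ↦ by positivity

lemma sum_div_sub_div_le (N k : ℕ) :
    ∑ d ∈ Icc 1 N, ((N / (k - d) / d : ℕ) : ℝ) ≤ N * (2 * harmonic (k - 1) / k) := by
  calc ∑ d ∈ Icc 1 N, ((N / (k - d) / d : ℕ) : ℝ)
      = ∑ d ∈ Icc 1 N with d < k, ((N / (k - d) / d : ℕ) : ℝ) := by
        refine (sum_filter_of_ne fun d _ hd ↦ ?_).symm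
        by_contra! hkd
        simp [Nat.sub_eq_zero_of_le hkd] at hd
    _ ≤ ∑ d ∈ Ico 1 k, ((N / (k - d) / d : ℕ) : ℝ) :=
        sum_le_sum_of_subset_of_nonneg
          (fun d hd ↦ by simp only [mem_filter, mem_Icc, mem_Ico] at hd ⊢; omega)
          fun _ _ _ ↦ by positivity
    _ ≤ ∑ d ∈ Ico 1 k, N * ((d : ℝ) * (k - d))⁻¹ := by
        refine sum_le_sum fun d hd ↦ ?_
        rw [← Nat.cast_sub (mem_Ico.mp hd).2.le, ← div_eq_mul_inv, mul_comm, ← div_div]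
        exact Nat.cast_div_le.trans (div_le_div_of_nonneg_right Nat.cast_div_le (by positivity))
    _ = N * (2 * harmonic (k - 1) / k) := by rw [← mul_sum, sum_inv_mul_sub]

lemma card_params_le (N : ℕ) :
    (#(params N) : ℝ) ≤ 2 * N * harmonic (N ^ 2) * harmonic N ^ 2 := by
  have hfib : #(params N) = ∑ t ∈ Icc 1 N ×ˢ Icc 1 N ×ˢ Icc 1 N,
      #{q ∈ params N | (q.2.1, q.2.2.2, q.2.2.1) = t} := by
    refine card_eq_sum_card_fiberwise fun q hq ↦ ?_
    simp only [params, coe_filter, Set.mem_ofPred_eq, mem_product, mem_Icc] at hq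
    simp only [coe_product, Set.mem_prod, coe_Icc, Set.mem_Icc]
    omega
  calc (#(params N) : ℝ)
      ≤ ∑ x ∈ Icc 1 N, ∑ m ∈ Icc 1 N, ∑ d ∈ Icc 1 N, ((N / (m * x - d) / d : ℕ) : ℝ) := by
        rw [hfib, Nat.cast_sum, sum_product]
        refine sum_le_sum fun x _ ↦ ?_
        rw [sum_product]
        exact sum_le_sum fun m _ ↦ sum_le_sum fun d _ ↦ by
          exact_mod_cast card_fiber_params_le N x m d
    _ ≤ ∑ x ∈ Icc 1 N, ∑ m ∈ Icc 1 N, 2 * N * harmonic (N ^ 2) * ((x : ℝ)⁻¹ * (m : ℝ)⁻¹) := by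
        refine sum_le_sum fun x hx ↦ sum_le_sum fun m hm ↦ (sum_div_sub_div_le N (m * x)).trans ?_
        obtain ⟨hx1, hxN⟩ := mem_Icc.mp hx
        obtain ⟨hm1, hmN⟩ := mem_Icc.mp hm
        have hH : (harmonic (m * x - 1) : ℝ) ≤ harmonic (N ^ 2) := by
          exact_mod_cast harmonic_mono ((Nat.sub_le _ _).trans (sq N ▸ Nat.mul_le_mul hmN hxN))
        rw [Nat.cast_mul, div_eq_mul_inv, mul_inv]
        calc (N : ℝ) * (2 * harmonic (m * x - 1) * ((m : ℝ)⁻¹ * (x : ℝ)⁻¹))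
            = 2 * N * harmonic (m * x - 1) * ((x : ℝ)⁻¹ * (m : ℝ)⁻¹) := by ring
          _ ≤ 2 * N * harmonic (N ^ 2) * ((x : ℝ)⁻¹ * (m : ℝ)⁻¹) := by gcongr
    _ = 2 * N * harmonic (N ^ 2) * ((∑ x ∈ Icc 1 N, (x : ℝ)⁻¹) * ∑ m ∈ Icc 1 N, (m : ℝ)⁻¹) := by
        simp_rw [sum_mul_sum, mul_sum]
    _ = 2 * N * harmonic (N ^ 2) * harmonic N ^ 2 := by
        rw [harmonic_eq_sum_Icc (n := N)]
        push_cast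
        ring

lemma card_params_floor_lt {T : ℝ} (hT : Real.exp 1 ≤ T) :
    (#(params ⌊T⌋₊) : ℝ) < 25 * T * Real.log T ^ 3 := by
  set N := ⌊T⌋₊
  set L := Real.log T
  have hT0 : 0 < T := (Real.exp_pos 1).trans_le hT
  have hL : 1 ≤ L := by rw [← Real.log_exp 1]; exact Real.log_le_log (Real.exp_pos 1) hT
  have hNT : (N : ℝ) ≤ T := Nat.floor_le hT0.le
  have hN1 : 1 ≤ N := Nat.le_floor (by norm_num; linarith [Real.add_one_le_exp 1])
  have hN : (1 : ℝ) ≤ N := by exact_mod_cast hN1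
  have hlogN : Real.log N ≤ L := Real.log_le_log (by linarith) hNT
  have hH2 : (harmonic (N ^ 2) : ℝ) ≤ 3 * L := by
    have := harmonic_le_one_add_log (N ^ 2)
    rw [Nat.cast_pow, Real.log_pow] at this
    push_cast at this
    linarith
  have hH : (harmonic N : ℝ) ≤ 2 * L := by linarith [harmonic_le_one_add_log N]
  have hH0 : (0 : ℝ) ≤ harmonic N := by exact_mod_cast (harmonic_pos (by omega)).le
  have hH20 : (0 : ℝ) ≤ harmonic (N ^ 2) := by exact_mod_cast (harmonic_pos (by positivity)).le
  calc (#(params N) : ℝ) ≤ 2 * N * harmonic (N ^ 2) * harmonic N ^ 2 := card_params_le N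
    _ ≤ 2 * T * (3 * L) * (2 * L) ^ 2 := by gcongr
    _ < 25 * T * L ^ 3 := by nlinarith [pow_pos (by linarith : (0 : ℝ) < L) 3]

/-! ### Lower bound -/

lemma harmonic_sq_le_two_mul_sum_coprime (p : ℕ) :
    (harmonic p : ℝ) ^ 2 ≤
      2 * ∑ z ∈ Icc 1 p ×ˢ Icc 1 p with z.1.Coprime z.2, ((z.1 : ℝ) * z.2)⁻¹ := by
  set C := {z ∈ Icc 1 p ×ˢ Icc 1 p | z.1.Coprime z.2}
  let w : ℕ × ℕ × ℕ → ℝ := fun v ↦ ((v.1 : ℝ) ^ 2)⁻¹ * ((v.2.1 : ℝ) * v.2.2)⁻¹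
  let ψ : ℕ × ℕ → ℕ × ℕ × ℕ := fun z ↦ (z.1.gcd z.2, z.1 / z.1.gcd z.2, z.2 / z.1.gcd z.2)
  have hw : ∀ z ∈ Icc 1 p ×ˢ Icc 1 p, ((z.1 : ℝ) * z.2)⁻¹ = w (ψ z) := by
    rintro ⟨a, b⟩ -
    have ha : (a : ℝ) = a.gcd b * (a / a.gcd b : ℕ) := by
      exact_mod_cast (Nat.mul_div_cancel' (Nat.gcd_dvd_left a b)).symm
    have hb : (b : ℝ) = a.gcd b * (b / a.gcd b : ℕ) := by
      exact_mod_cast (Nat.mul_div_cancel' (Nat.gcd_dvd_right a b)).symm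
    simp only [w, ψ]
    rw [ha, hb]
    ring
  have hψ_inj : Set.InjOn ψ (Icc 1 p ×ˢ Icc 1 p : Finset _) := by
    rintro ⟨a, b⟩ - ⟨a', b'⟩ - h
    simp only [ψ, Prod.mk.injEq] at h
    obtain ⟨hg, ha, hb⟩ := h
    refine Prod.ext ?_ ?_
    · calc a = a / a.gcd b * a.gcd b := (Nat.div_mul_cancel (Nat.gcd_dvd_left a b)).symm
        _ = a' / a'.gcd b' * a'.gcd b' := by rw [ha, hg]
        _ = a' := Nat.div_mul_cancel (Nat.gcd_dvd_left a' b')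
    · calc b = b / a.gcd b * a.gcd b := (Nat.div_mul_cancel (Nat.gcd_dvd_right a b)).symm
        _ = b' / a'.gcd b' * a'.gcd b' := by rw [hb, hg]
        _ = b' := Nat.div_mul_cancel (Nat.gcd_dvd_right a' b')
  have hψ_maps : (Icc 1 p ×ˢ Icc 1 p).image ψ ⊆ Icc 1 p ×ˢ C := by
    simp only [subset_iff, mem_image, mem_product, mem_Icc, C, mem_filter]
    rintro _ ⟨⟨a, b⟩, ⟨⟨ha1, hap⟩, hb1, hbp⟩, rfl⟩
    have hg : 0 < a.gcd b := Nat.gcd_pos_of_pos_left b ha1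
    refine ⟨⟨hg, (Nat.gcd_le_left b ha1).trans hap⟩, ⟨⟨?_, (Nat.div_le_self a _).trans hap⟩,
      ?_, (Nat.div_le_self b _).trans hbp⟩, Nat.coprime_div_gcd_div_gcd hg⟩
    · exact Nat.div_pos (Nat.gcd_le_left b ha1) hg
    · exact Nat.div_pos (Nat.gcd_le_right a hb1) hg
  calc (harmonic p : ℝ) ^ 2 = ∑ z ∈ Icc 1 p ×ˢ Icc 1 p, ((z.1 : ℝ) * z.2)⁻¹ := by
        rw [sq, harmonic_eq_sum_Icc, Rat.cast_sum, sum_mul_sum, sum_product]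
        push_cast
        simp_rw [mul_inv]
    _ = ∑ v ∈ (Icc 1 p ×ˢ Icc 1 p).image ψ, w v := by
        rw [sum_image hψ_inj]
        exact sum_congr rfl hw
    _ ≤ ∑ v ∈ Icc 1 p ×ˢ C, w v :=
        sum_le_sum_of_subset_of_nonneg hψ_maps fun _ _ _ ↦ by positivity
    _ = (∑ g ∈ Icc 1 p, ((g : ℝ) ^ 2)⁻¹) * ∑ z ∈ C, ((z.1 : ℝ) * z.2)⁻¹ := by
        rw [sum_product, sum_mul_sum]
    _ ≤ 2 * ∑ z ∈ C, ((z.1 : ℝ) * z.2)⁻¹ := by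
        refine mul_le_mul_of_nonneg_right ?_ (sum_nonneg fun _ _ ↦ by positivity)
        have hIcc : Icc 1 p = Ioo 0 (p + 1) := by ext; simp only [mem_Icc, mem_Ioo]; omega
        rw [hIcc]
        convert sum_Ioo_inv_sq_le (α := ℝ) 0 (p + 1)
        norm_num

def coprimePairs (p : ℕ) : Finset (ℕ × ℕ) := {z ∈ Icc 1 p ×ˢ Icc 2 p | z.1.Coprime z.2}

lemma mem_coprimePairs {p d x : ℕ} :
    (d, x) ∈ coprimePairs p ↔ (1 ≤ d ∧ d ≤ p) ∧ (2 ≤ x ∧ x ≤ p) ∧ d.Coprime x := by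
  simp [coprimePairs, and_assoc]

lemma sum_coprimePairs_ge (p : ℕ) :
    (harmonic p : ℝ) ^ 2 / 2 - harmonic p ≤ ∑ z ∈ coprimePairs p, ((z.1 : ℝ) * z.2)⁻¹ := by
  set C := {z ∈ Icc 1 p ×ˢ Icc 1 p | z.1.Coprime z.2}
  have hsplit : {z ∈ C | 2 ≤ z.2} = coprimePairs p := by
    ext z
    simp only [C, coprimePairs, mem_filter, mem_product, mem_Icc]
    omega
  have hone : ∑ z ∈ C with ¬ 2 ≤ z.2, ((z.1 : ℝ) * z.2)⁻¹ ≤ harmonic p := by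
    calc ∑ z ∈ C with ¬ 2 ≤ z.2, ((z.1 : ℝ) * z.2)⁻¹
        ≤ ∑ z ∈ Icc 1 p ×ˢ ({1} : Finset ℕ), ((z.1 : ℝ) * z.2)⁻¹ := by
          refine sum_le_sum_of_subset_of_nonneg (fun z hz ↦ ?_) fun _ _ _ ↦ by positivity
          simp only [C, mem_filter, mem_product, mem_Icc, mem_singleton] at hz ⊢
          omega
      _ = harmonic p := by simp [harmonic_eq_sum_Icc]
  have := harmonic_sq_le_two_mul_sum_coprime p
  rw [← sum_filter_add_sum_filter_not C (2 ≤ ·.2), hsplit] at this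
  linarith

lemma mem_params_of_mul_le {N X x d m : ℕ} (hx : 1 < x) (hd : 0 < d) (hdX : d ≤ X)
    (hdvd : d ∣ X * x + 1) (hdm : d ≤ m) (hN : 2 * (m * (X * x)) ≤ N) :
    (X, x, d, m) ∈ params N := by
  have hmx : 2 * m ≤ m * x := by nlinarith
  have hXm : X * (m * x - d) ≤ m * (X * x) :=
    (Nat.mul_le_mul_left X (Nat.sub_le _ _)).trans_eq (by ring)
  have hm : m ≤ m * (X * x) := Nat.le_mul_of_pos_right m (Nat.mul_pos (by omega) (by omega))
  exact mem_params.mpr ⟨⟨hx, hd, hdX, hdvd, by omega⟩, by rw [paramValue]; omega⟩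

def negInvMod (d x : ℕ) : ℕ := (-(x : ZMod d)⁻¹).val

lemma negInvMod_lt {d : ℕ} (hd : 0 < d) (x : ℕ) : negInvMod d x < d :=
  have : NeZero d := ⟨hd.ne'⟩
  ZMod.val_lt _

lemma dvd_negInvMod_add_mul {d x : ℕ} (hd : 0 < d) (hcop : d.Coprime x) (t : ℕ) :
    d ∣ (negInvMod d x + d * t) * x + 1 := by
  have : NeZero d := ⟨hd.ne'⟩
  rw [← ZMod.natCast_eq_zero_iff]
  push_cast
  rw [negInvMod, ZMod.natCast_val, ZMod.cast_id', id, ZMod.natCast_self]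
  linear_combination -ZMod.coe_mul_inv_eq_one x hcop.symm

lemma le_card_Icc_div {K a d : ℕ} (ha : 0 < a) (h : 2 * d * a ≤ K) :
    (K : ℝ) / (2 * a) ≤ #(Icc d (K / a)) := by
  have hdM : d ≤ K / a := (Nat.le_div_iff_mul_le ha).mpr (by nlinarith)
  have hK : (K : ℝ) < (K / a : ℕ) * a + a := by exact_mod_cast Nat.lt_div_mul_add ha
  have h' : (2 * d * a : ℝ) ≤ K := by exact_mod_cast h
  rw [Nat.card_Icc, Nat.cast_sub (by omega), div_le_iff₀ (by positivity)]
  push_cast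
  nlinarith

lemma card_sigma_le_card_params {N K p : ℕ} (hN : 2 * K ≤ N) :
    #((coprimePairs p ×ˢ Icc 1 p).sigma fun g ↦
      Icc g.1.1 (K / ((negInvMod g.1.1 g.1.2 + g.1.1 * g.2) * g.1.2))) ≤ #(params N) := by
  refine card_le_card_of_injOn (fun s ↦ (negInvMod s.1.1.1 s.1.1.2 + s.1.1.1 * s.1.2, s.1.1.2,
    s.1.1.1, s.2)) (fun s hs ↦ ?_) fun s hs s' hs' h ↦ ?_
  · obtain ⟨⟨⟨d, x⟩, t⟩, m⟩ := s
    simp only [mem_coe, mem_sigma, mem_product, mem_coprimePairs, mem_Icc] at hs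
    obtain ⟨⟨⟨⟨hd, -⟩, ⟨hx, -⟩, hcop⟩, ht, -⟩, hdm, hmK⟩ := hs
    dsimp only
    have hdX : d ≤ negInvMod d x + d * t := le_add_left (Nat.le_mul_of_pos_right d ht)
    refine mem_params_of_mul_le hx hd hdX (dvd_negInvMod_add_mul hd hcop t) hdm ?_
    have := (Nat.le_div_iff_mul_le (Nat.mul_pos (by omega) (by omega))).mp hmK
    omega
  · obtain ⟨⟨⟨d, x⟩, t⟩, m⟩ := s
    obtain ⟨⟨⟨d', x'⟩, t'⟩, m'⟩ := s'
    simp only [Prod.mk.injEq] at h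
    obtain ⟨hX, rfl, rfl, rfl⟩ := h
    have hd : 0 < d := by
      simp only [coe_sigma, Set.mem_sigma_iff, coe_product, Set.mem_prod, mem_coe,
        mem_coprimePairs] at hs
      omega
    obtain rfl : t = t' := Nat.eq_of_mul_eq_mul_left hd (by omega)
    rfl

lemma card_params_ge {N K p : ℕ} (hK : 4 * p ^ 4 ≤ K) (hN : 2 * K ≤ N) :
    (K : ℝ) / 4 * (∑ z ∈ coprimePairs p, ((z.1 : ℝ) * z.2)⁻¹) * harmonic p ≤ #(params N) := by
  have hbounds : ∀ g ∈ coprimePairs p ×ˢ Icc 1 p,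
      0 < (negInvMod g.1.1 g.1.2 + g.1.1 * g.2) * g.1.2 ∧
      negInvMod g.1.1 g.1.2 + g.1.1 * g.2 ≤ 2 * g.1.1 * g.2 ∧
      2 * g.1.1 * ((negInvMod g.1.1 g.1.2 + g.1.1 * g.2) * g.1.2) ≤ K := by
    rintro ⟨⟨d, x⟩, t⟩ hg
    simp only [mem_product, mem_coprimePairs, mem_Icc] at hg
    obtain ⟨⟨⟨hd1, hdp⟩, ⟨hx2, hxp⟩, -⟩, ht1, htp⟩ := hg
    have hX : negInvMod d x + d * t ≤ 2 * d * t := by nlinarith [negInvMod_lt hd1 x]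
    dsimp only
    refine ⟨Nat.mul_pos (by nlinarith) (by omega), hX, ?_⟩
    calc 2 * d * ((negInvMod d x + d * t) * x) ≤ 2 * p * ((2 * p * p) * p) := by gcongr; nlinarith
      _ = 4 * p ^ 4 := by ring
      _ ≤ K := hK
  calc (K : ℝ) / 4 * (∑ z ∈ coprimePairs p, ((z.1 : ℝ) * z.2)⁻¹) * harmonic p
      = ∑ g ∈ coprimePairs p ×ˢ Icc 1 p, (K : ℝ) / (2 * (2 * g.1.1 * g.2 * g.1.2)) := by
        rw [harmonic_eq_sum_Icc, sum_product, mul_sum, sum_mul]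
        refine sum_congr rfl fun z _ ↦ ?_
        push_cast
        rw [mul_sum]
        refine sum_congr rfl fun t _ ↦ ?_
        field_simp
        ring
    _ ≤ ∑ g ∈ coprimePairs p ×ˢ Icc 1 p,
          (K : ℝ) / (2 * ((negInvMod g.1.1 g.1.2 + g.1.1 * g.2 : ℕ) * g.1.2)) := by
        refine sum_le_sum fun g hg ↦ ?_
        obtain ⟨hpos, hX, -⟩ := hbounds g hg
        have : (0 : ℝ) < (negInvMod g.1.1 g.1.2 + g.1.1 * g.2 : ℕ) * g.1.2 := by exact_mod_cast hpos
        gcongr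
        exact_mod_cast hX
    _ ≤ ∑ g ∈ coprimePairs p ×ˢ Icc 1 p,
          (#(Icc g.1.1 (K / ((negInvMod g.1.1 g.1.2 + g.1.1 * g.2) * g.1.2))) : ℝ) := by
        refine sum_le_sum fun g hg ↦ ?_
        obtain ⟨hpos, -, hK⟩ := hbounds g hg
        exact_mod_cast le_card_Icc_div hpos hK
    _ ≤ #(params N) := by
        rw [← Nat.cast_sum, ← card_sigma]
        exact_mod_cast card_sigma_le_card_params hN

lemma exists_harmonic_ge_log {T : ℝ} (hT : Real.exp 48 ≤ T) :
    ∃ p : ℕ, 8 * p ^ 4 ≤ ⌊T⌋₊ ∧ Real.log T / 12 ≤ harmonic p := by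
  set L := Real.log T
  set A := Real.exp (L / 12)
  have hT0 : 0 < T := (Real.exp_pos 48).trans_le hT
  have hA12 : A ^ 4 * (A ^ 4) ^ 2 = T := by
    rw [← pow_mul, ← pow_add, ← Real.exp_nat_mul,
      show ((4 + 4 * 2 : ℕ) : ℝ) * (L / 12) = L by push_cast; ring, Real.exp_log hT0]
  have hA : 16 ≤ A ^ 4 := by
    have hL : 48 ≤ L := by rw [← Real.log_exp 48]; exact Real.log_le_log (Real.exp_pos 48) hT
    have : 2 ≤ A := by linarith [Real.add_one_le_exp (L / 12)]
    linarith [pow_le_pow_left₀ (by norm_num) this 4]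
  refine ⟨⌊A⌋₊, ?_, ?_⟩
  · have : (8 * ⌊A⌋₊ ^ 4 : ℝ) < ⌊T⌋₊ := by
      have : (⌊A⌋₊ : ℝ) ^ 4 ≤ A ^ 4 := by gcongr; exact Nat.floor_le (Real.exp_pos _).le
      nlinarith [Nat.lt_floor_add_one T]
    exact_mod_cast this.le
  · refine le_trans ?_ (log_add_one_le_harmonic _)
    rw [← Real.log_exp (L / 12)]
    exact Real.log_le_log (Real.exp_pos _) (by push_cast; exact (Nat.lt_floor_add_one A).le)

lemma lt_card_params_floor {T : ℝ} (hT : Real.exp 48 ≤ T) :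
    1 / 200000 * T * Real.log T ^ 3 < #(params ⌊T⌋₊) := by
  set N := ⌊T⌋₊
  set L := Real.log T
  obtain ⟨p, hp, hH⟩ := exists_harmonic_ge_log hT
  have hL : 48 ≤ L := by rw [← Real.log_exp 48]; exact Real.log_le_log (Real.exp_pos 48) hT
  have hT4 : 4 ≤ T := by linarith [Real.add_one_le_exp 48]
  have hK : T / 4 ≤ ((N / 2 : ℕ) : ℝ) := by
    have : (N : ℝ) ≤ 2 * (N / 2 : ℕ) + 1 := by exact_mod_cast (by omega : N ≤ 2 * (N / 2) + 1)
    linarith [Nat.lt_floor_add_one T]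
  have hH0 : (0 : ℝ) ≤ harmonic p := by linarith
  have hHsq : (L / 12) ^ 2 / 4 ≤ (harmonic p : ℝ) ^ 2 / 2 - harmonic p := by nlinarith
  have hHsq0 : 0 ≤ (harmonic p : ℝ) ^ 2 / 2 - harmonic p := hHsq.trans' (by positivity)
  have hC := sum_coprimePairs_ge p
  calc 1 / 200000 * T * L ^ 3 < T / 4 / 4 * ((L / 12) ^ 2 / 4) * (L / 12) := by
        nlinarith [pow_pos (by linarith : (0 : ℝ) < L) 3, (Real.exp_pos 48).trans_le hT]
    _ ≤ ((N / 2 : ℕ) : ℝ) / 4 * ((harmonic p : ℝ) ^ 2 / 2 - harmonic p) * harmonic p := by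
        gcongr
    _ ≤ ((N / 2 : ℕ) : ℝ) / 4 * (∑ z ∈ coprimePairs p, ((z.1 : ℝ) * z.2)⁻¹) * harmonic p := by
        gcongr
    _ ≤ #(params N) := card_params_ge (by omega) (by omega)

end NumSolutions

/-- Theorem 4: There exist positive constants `C₁, C₂` such that for
all sufficiently large `T`,
`C₁·T·(log T)³ < ∑_{n=2}^{⌊T⌋} f(n) < C₂·T·(log T)³`. -/
theorem average_f_bounds :
    ∃ C₁ C₂ : ℝ, 0 < C₁ ∧ 0 < C₂ ∧ ∃ T₀ : ℝ, ∀ T : ℝ, T₀ ≤ T →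
      C₁ * T * Real.log T ^ 3 < (∑ n ∈ Finset.Icc 2 ⌊T⌋₊, (numSolutions n : ℝ)) ∧
      (∑ n ∈ Finset.Icc 2 ⌊T⌋₊, (numSolutions n : ℝ)) < C₂ * T * Real.log T ^ 3 := by
  refine ⟨1 / 200000, 25, by norm_num, by norm_num, Real.exp 48, fun T hT ↦ ?_⟩
  have hsum : ∑ n ∈ Finset.Icc 2 ⌊T⌋₊, (numSolutions n : ℝ) = #(NumSolutions.params ⌊T⌋₊) := by
    exact_mod_cast NumSolutions.sum_numSolutions_eq_card_params ⌊T⌋₊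
  rw [hsum]
  exact ⟨NumSolutions.lt_card_params_floor hT,
    NumSolutions.card_params_floor_lt ((Real.exp_le_exp.mpr (by norm_num)).trans hT)⟩
end

section
/- For an integer n ≥ 3, let M(n,2) denote the number of solutions (X, x, Y, y) with 1 < x < y to equation (1) satisfying n − XY = 2. Then M(n,2) = (1/2)·θ(n)·θ(n−2) − 1 if n is odd, and M(n,2) = θ_odd(n)·θ_odd(n−2) − 1 if n is even. -/
/-!
With `n - XY = 2`, equation (1) reduces to `Xx + Yy + 1 = 2xy`, i.e. to
`(2x - Y)(2y - X) = XY + 2 = n`. So the solutions correspond to pairs of factorizations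
`n = t * s`, `n - 2 = u * v` with `t ≡ u` and `s ≡ v (mod 2)`, via `u = Y`, `v = X`,
`t + u = 2x`, `s + v = 2y`; the conditions `x < y` and `x > 1` become `t + u < s + v` and
`(t, u) ≠ (1, 1)`. Swapping both factorizations is an involution that exchanges `t + u < s + v`
with `t + u > s + v` (equality would force `t = u = 1` and `n = 2`), so `M(n,2) + 1` is half the
number of all such pairs. For odd `n` every pair of factorizations qualifies; for even `n`,
one of `n`, `n - 2` is `2 (mod 4)`, so either `t, u` or `s, v` are both odd, and each alternative
contributes `θ_odd(n) θ_odd(n-2)` pairs.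
-/

/-- `M(n, k)`: the number of solutions `(X, x, Y, y)` in positive integers with
`1 < x < y` to `(X + 1/x)(Y + 1/y) = n`, i.e. `(Xx + 1)(Yy + 1) = n·x·y`,
satisfying `n - XY = k`. A quadruple `q` encodes
`(X, x, Y, y) = (q.1, q.2.1, q.2.2.1, q.2.2.2)`. -/
noncomputable def M (n k : ℕ) : ℕ :=
  Nat.card {q : ℕ × ℕ × ℕ × ℕ | 0 < q.1 ∧ 0 < q.2.2.1 ∧ 1 < q.2.1 ∧ q.2.1 < q.2.2.2 ∧
    (q.1 * q.2.1 + 1) * (q.2.2.1 * q.2.2.2 + 1) = n * q.2.1 * q.2.2.2 ∧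
    n - q.1 * q.2.2.1 = k}

/-- The number of odd positive divisors of `m`. -/
def thetaOdd (m : ℕ) : ℕ := (m.divisors.filter fun d => Odd d).card

open Finset

lemma add_eq_two_of_mul_eq_mul_add_two {t s u v : ℕ} (h : t * s = u * v + 2)
    (heven : Even (t + u)) (hsum : t + u = s + v) : t + u = 2 := by
  obtain ⟨x, hx⟩ := heven
  -- `t * s - u * v = 2x (2x - u - v)` once `t + u = s + v = 2x`, so `x ∣ 1`
  have hx1 : (x : ℤ) * (2 * x - u - v) = 1 := by
    have ht : (t : ℤ) = 2 * x - u := by omega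
    have hs : (s : ℤ) = 2 * x - v := by omega
    have hZ : (t : ℤ) * s = u * v + 2 := by exact_mod_cast h
    rw [ht, hs] at hZ
    linarith
  have := Int.eq_one_of_mul_eq_one_right (Int.natCast_nonneg x) hx1
  omega

lemma mul_add_one_mul_add_one_eq_iff (X x Y y : ℤ) :
    (X * x + 1) * (Y * y + 1) = (X * Y + 2) * x * y ↔ (2 * x - Y) * (2 * y - X) = X * Y + 2 := by
  constructor <;> intro h <;> linarith

lemma sub_pos_of_mul_eq {X x Y y : ℤ} (hX : 0 ≤ X) (hY : 0 ≤ Y) (hx : 0 < x) (hy : 0 < y)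
    (h : (2 * x - Y) * (2 * y - X) = X * Y + 2) : 0 < 2 * x - Y ∧ 0 < 2 * y - X := by
  constructor <;> nlinarith

lemma card_filter_odd_fst_divisorsAntidiagonal (a : ℕ) :
    #(a.divisorsAntidiagonal.filter fun p => Odd p.1) = thetaOdd a := by
  rw [← Nat.map_div_right_divisors, filter_map, card_map]
  rfl

def congruentFactorizations (a b : ℕ) : Finset ((ℕ × ℕ) × (ℕ × ℕ)) :=
  (a.divisorsAntidiagonal ×ˢ b.divisorsAntidiagonal).filter
    fun p => Even (p.1.1 + p.2.1) ∧ Even (p.1.2 + p.2.2)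

namespace congruentFactorizations

variable {a b t s u v : ℕ}

@[simp]
lemma mem_iff : ((t, s), (u, v)) ∈ congruentFactorizations a b ↔
    (t * s = a ∧ a ≠ 0) ∧ (u * v = b ∧ b ≠ 0) ∧ Even (t + u) ∧ Even (s + v) := by
  simp [congruentFactorizations, and_assoc]

lemma map_swap_mem {p : (ℕ × ℕ) × (ℕ × ℕ)} (hp : p ∈ congruentFactorizations a b) :
    Prod.map Prod.swap Prod.swap p ∈ congruentFactorizations a b := by
  obtain ⟨⟨t, s⟩, u, v⟩ := p
  simp only [mem_iff, Prod.map, Prod.swap] at hp ⊢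
  obtain ⟨⟨hts, ha⟩, ⟨huv, hb⟩, htu, hsv⟩ := hp
  exact ⟨⟨by rw [mul_comm, hts], ha⟩, ⟨by rw [mul_comm, huv], hb⟩, hsv, htu⟩

lemma card_of_odd (ha : Odd a) (hb : Odd b) :
    #(congruentFactorizations a b) = #a.divisors * #b.divisors := by
  have hall : congruentFactorizations a b = a.divisorsAntidiagonal ×ˢ b.divisorsAntidiagonal := by
    refine filter_true_of_mem fun ⟨⟨t, s⟩, u, v⟩ hp => ?_
    simp only [mem_product, Nat.mem_divisorsAntidiagonal] at hp
    obtain ⟨⟨rfl, -⟩, rfl, -⟩ := hp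
    exact ⟨(Nat.odd_mul.1 ha).1.add_odd (Nat.odd_mul.1 hb).1,
      (Nat.odd_mul.1 ha).2.add_odd (Nat.odd_mul.1 hb).2⟩
  rw [hall, card_product, ← Nat.map_div_right_divisors, ← Nat.map_div_right_divisors,
    card_map, card_map]

lemma filter_odd_fst_eq_product (ha : Even a) (hb : Even b) :
    (congruentFactorizations a b).filter (fun p => Odd p.1.1) =
      (a.divisorsAntidiagonal.filter fun p => Odd p.1) ×ˢ
        (b.divisorsAntidiagonal.filter fun p => Odd p.1) := by
  ext ⟨⟨t, s⟩, u, v⟩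
  simp only [mem_filter, mem_iff, mem_product, Nat.mem_divisorsAntidiagonal]
  constructor
  · rintro ⟨⟨hts, huv, htu, -⟩, ht⟩
    refine ⟨⟨hts, ht⟩, huv, ?_⟩
    rw [← Nat.not_even_iff_odd] at ht ⊢
    exact fun hu => ht ((Nat.even_add.1 htu).2 hu)
  · rintro ⟨⟨⟨rfl, ha0⟩, ht⟩, ⟨rfl, hb0⟩, hu⟩
    have hs : Even s := (Nat.even_mul.1 ha).resolve_left (Nat.not_even_iff_odd.2 ht)
    have hv : Even v := (Nat.even_mul.1 hb).resolve_left (Nat.not_even_iff_odd.2 hu)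
    exact ⟨⟨⟨rfl, ha0⟩, ⟨rfl, hb0⟩, ht.add_odd hu, hs.add hv⟩, ht⟩

lemma card_of_even (ha : Even a) (hb : Even b) (h4 : ¬(4 ∣ a ∧ 4 ∣ b)) :
    #(congruentFactorizations a b) = 2 * (thetaOdd a * thetaOdd b) := by
  -- If `t` is even then so is `u`, and `s`, `v` are odd because `4` does not divide both.
  have hswap : #((congruentFactorizations a b).filter fun p => ¬Odd p.1.1) =
      #((congruentFactorizations a b).filter fun p => Odd p.1.1) := by
    refine card_nbij' (Prod.map Prod.swap Prod.swap) (Prod.map Prod.swap Prod.swap) ?_ ?_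
      (fun _ _ => rfl) (fun _ _ => rfl)
    · rintro ⟨⟨t, s⟩, u, v⟩ hp
      obtain ⟨hp, ht⟩ := mem_filter.1 hp
      refine mem_filter.2 ⟨map_swap_mem hp, ?_⟩
      simp only [mem_iff] at hp
      obtain ⟨⟨rfl, -⟩, ⟨rfl, -⟩, htu, hsv⟩ := hp
      rw [Nat.not_odd_iff_even] at ht
      have hu : Even u := (Nat.even_add.1 htu).1 ht
      by_contra hs
      rw [Nat.not_odd_iff_even] at hs
      have hv : Even v := (Nat.even_add.1 hsv).1 hs
      exact h4 ⟨mul_dvd_mul (even_iff_two_dvd.1 ht) (even_iff_two_dvd.1 hs),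
        mul_dvd_mul (even_iff_two_dvd.1 hu) (even_iff_two_dvd.1 hv)⟩
    · rintro ⟨⟨t, s⟩, u, v⟩ hp
      obtain ⟨hp, ht⟩ := mem_filter.1 hp
      refine mem_filter.2 ⟨map_swap_mem hp, ?_⟩
      simp only [mem_iff] at hp
      obtain ⟨⟨rfl, -⟩, -⟩ := hp
      exact Nat.not_odd_iff_even.2 ((Nat.even_mul.1 ha).resolve_left (Nat.not_even_iff_odd.2 ht))
  rw [← card_filter_add_card_filter_not (fun p => Odd p.1.1), hswap,
    filter_odd_fst_eq_product ha hb, card_product, card_filter_odd_fst_divisorsAntidiagonal,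
    card_filter_odd_fst_divisorsAntidiagonal]
  ring

lemma add_ne_add (hb : b ≠ 0) (hp : ((t, s), (u, v)) ∈ congruentFactorizations (b + 2) b) :
    t + u ≠ s + v := by
  obtain ⟨⟨hts, -⟩, ⟨huv, -⟩, htu, -⟩ := mem_iff.1 hp
  intro hsum
  have h2 := add_eq_two_of_mul_eq_mul_add_two (by rw [hts, huv]) htu hsum
  have : t ≠ 0 ∧ s ≠ 0 ∧ u ≠ 0 ∧ v ≠ 0 := by
    refine ⟨?_, ?_, ?_, ?_⟩ <;> rintro rfl <;> simp_all
  have ht : t = 1 := by omega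
  have hs : s = 1 := by omega
  subst ht hs
  omega

lemma card_eq_two_mul_card_filter_lt (hb : b ≠ 0) :
    #(congruentFactorizations (b + 2) b) =
      2 * #((congruentFactorizations (b + 2) b).filter fun p => p.1.1 + p.2.1 < p.1.2 + p.2.2) := by
  have hswap :
      #((congruentFactorizations (b + 2) b).filter fun p => ¬p.1.1 + p.2.1 < p.1.2 + p.2.2) =
        #((congruentFactorizations (b + 2) b).filter fun p => p.1.1 + p.2.1 < p.1.2 + p.2.2) := by
    refine card_nbij' (Prod.map Prod.swap Prod.swap) (Prod.map Prod.swap Prod.swap) ?_ ?_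
      (fun _ _ => rfl) (fun _ _ => rfl)
    · rintro ⟨⟨t, s⟩, u, v⟩ hp
      obtain ⟨hp, hlt⟩ := mem_filter.1 hp
      have hne := add_ne_add hb hp
      refine mem_filter.2 ⟨map_swap_mem hp, ?_⟩
      simp only [Prod.map_apply, Prod.fst_swap, Prod.snd_swap] at hlt ⊢
      omega
    · rintro ⟨⟨t, s⟩, u, v⟩ hp
      obtain ⟨hp, hlt⟩ := mem_filter.1 hp
      refine mem_filter.2 ⟨map_swap_mem hp, ?_⟩
      simp only [Prod.map_apply, Prod.fst_swap, Prod.snd_swap] at hlt ⊢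
      omega
  rw [← card_filter_add_card_filter_not (fun p => p.1.1 + p.2.1 < p.1.2 + p.2.2), hswap, two_mul]

end congruentFactorizations

/-- The factor pairs `t * s = X * Y + 2`, `u * v = X * Y` of a solution are
`t = 2x - Y`, `s = 2y - X`, `u = Y`, `v = X`. -/
def solutionOfFactorizations (p : (ℕ × ℕ) × (ℕ × ℕ)) : ℕ × ℕ × ℕ × ℕ :=
  (p.2.2, (p.1.1 + p.2.1) / 2, p.2.1, (p.1.2 + p.2.2) / 2)

lemma solutionSet_eq_image {m : ℕ} (hm : m ≠ 0) :
    {q : ℕ × ℕ × ℕ × ℕ | 0 < q.1 ∧ 0 < q.2.2.1 ∧ 1 < q.2.1 ∧ q.2.1 < q.2.2.2 ∧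
      (q.1 * q.2.1 + 1) * (q.2.2.1 * q.2.2.2 + 1) = (m + 2) * q.2.1 * q.2.2.2 ∧
      m + 2 - q.1 * q.2.2.1 = 2} =
    solutionOfFactorizations '' ((congruentFactorizations (m + 2) m).filter
      fun p => 2 < p.1.1 + p.2.1 ∧ p.1.1 + p.2.1 < p.1.2 + p.2.2) := by
  ext ⟨X, x, Y, y⟩
  simp only [Set.mem_ofPred_eq, coe_filter, Set.mem_image, Prod.exists]
  constructor
  · rintro ⟨hX, hY, hx, hxy, heq, hk⟩
    have hXY : X * Y = m := by omega
    have hZ : (2 * (x : ℤ) - Y) * (2 * y - X) = X * Y + 2 := by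
      rw [← mul_add_one_mul_add_one_eq_iff]
      rw [← hXY] at heq
      exact_mod_cast heq
    obtain ⟨hYx, hXy⟩ := sub_pos_of_mul_eq (by positivity) (by positivity) (by omega) (by omega) hZ
    have hts : (2 * x - Y) * (2 * y - X) = m + 2 := by
      rw [← hXY]
      zify [(by omega : Y ≤ 2 * x), (by omega : X ≤ 2 * y)]
      exact hZ
    refine ⟨2 * x - Y, 2 * y - X, Y, X, ⟨?_, by omega⟩, ?_⟩
    · rw [congruentFactorizations.mem_iff]
      exact ⟨⟨hts, by omega⟩, ⟨by rw [mul_comm, hXY], hm⟩, ⟨x, by omega⟩, ⟨y, by omega⟩⟩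
    · simp only [solutionOfFactorizations, Prod.mk.injEq, true_and]
      omega
  · rintro ⟨t, s, u, v, ⟨hp, hlt⟩, hq⟩
    simp only [solutionOfFactorizations, Prod.mk.injEq] at hq
    obtain ⟨rfl, rfl, rfl, rfl⟩ := hq
    obtain ⟨⟨hts, -⟩, ⟨huv, -⟩, ⟨x, hx⟩, ⟨y, hy⟩⟩ := congruentFactorizations.mem_iff.1 hp
    obtain ⟨hu, hv⟩ := mul_ne_zero_iff.1 (huv ▸ hm)
    rw [show (t + u) / 2 = x by omega, show (s + v) / 2 = y by omega, ← huv, mul_comm u v]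
    refine ⟨by omega, by omega, by omega, by omega, ?_, by omega⟩
    have hZ : (2 * (x : ℤ) - u) * (2 * y - v) = v * u + 2 := by
      rw [show 2 * (x : ℤ) - u = t by omega, show 2 * (y : ℤ) - v = s by omega]
      exact_mod_cast hts.trans (by rw [← huv, mul_comm])
    exact_mod_cast (mul_add_one_mul_add_one_eq_iff (v : ℤ) x u y).2 hZ

lemma injOn_solutionOfFactorizations (a b : ℕ) :
    Set.InjOn solutionOfFactorizations (congruentFactorizations a b) := by
  rintro ⟨⟨t, s⟩, u, v⟩ hp ⟨⟨t', s'⟩, u', v'⟩ hp' heq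
  obtain ⟨-, -, ⟨x, hx⟩, ⟨y, hy⟩⟩ := congruentFactorizations.mem_iff.1 hp
  obtain ⟨-, -, ⟨x', hx'⟩, ⟨y', hy'⟩⟩ := congruentFactorizations.mem_iff.1 hp'
  simp only [solutionOfFactorizations, Prod.mk.injEq] at heq ⊢
  omega

lemma M_eq_card {m : ℕ} (hm : m ≠ 0) :
    M (m + 2) 2 = #((congruentFactorizations (m + 2) m).filter
      fun p => 2 < p.1.1 + p.2.1 ∧ p.1.1 + p.2.1 < p.1.2 + p.2.2) := by
  rw [M, solutionSet_eq_image hm, Nat.card_coe_set_eq,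
    ((injOn_solutionOfFactorizations _ _).mono (filter_subset _ _)).ncard_image,
    Set.ncard_coe_finset]

lemma filter_two_lt_eq_erase {m : ℕ} :
    (congruentFactorizations (m + 2) m).filter
        (fun p => 2 < p.1.1 + p.2.1 ∧ p.1.1 + p.2.1 < p.1.2 + p.2.2) =
      ((congruentFactorizations (m + 2) m).filter
        fun p => p.1.1 + p.2.1 < p.1.2 + p.2.2).erase ((1, m + 2), (1, m)) := by
  ext ⟨⟨t, s⟩, u, v⟩
  simp only [mem_filter, mem_erase, ne_eq, Prod.mk.injEq, congruentFactorizations.mem_iff]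
  constructor
  · rintro ⟨hp, h2, hlt⟩
    exact ⟨by omega, hp, hlt⟩
  · rintro ⟨hne, ⟨⟨hts, h0⟩, ⟨huv, hm⟩, hp⟩, hlt⟩
    refine ⟨⟨⟨hts, h0⟩, ⟨huv, hm⟩, hp⟩, ?_, hlt⟩
    obtain ⟨ht, -⟩ := mul_ne_zero_iff.1 (hts ▸ h0)
    obtain ⟨hu, -⟩ := mul_ne_zero_iff.1 (huv ▸ hm)
    by_contra h2
    obtain ⟨rfl, rfl⟩ : t = 1 ∧ u = 1 := by omega
    simp only [one_mul] at hts huv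
    exact hne ⟨⟨rfl, hts⟩, rfl, huv⟩

/-- Lemma 4: For `n ≥ 3`,
`M(n,2) = (1/2)·θ(n)·θ(n-2) - 1` if `n` is odd, and
`M(n,2) = θ_odd(n)·θ_odd(n-2) - 1` if `n` is even. -/
theorem M_n_two (n : ℕ) (hn : 3 ≤ n) :
    (Odd n → (M n 2 : ℝ) =
        (1 / 2) * (n.divisors.card : ℝ) * ((n - 2).divisors.card : ℝ) - 1) ∧
    (Even n → (M n 2 : ℝ) = (thetaOdd n : ℝ) * (thetaOdd (n - 2) : ℝ) - 1) := by
  obtain ⟨m, rfl⟩ : ∃ m, n = m + 2 := ⟨n - 2, by omega⟩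
  have hm : m ≠ 0 := by omega
  have hbase : ((1, m + 2), (1, m)) ∈ (congruentFactorizations (m + 2) m).filter
      fun p => p.1.1 + p.2.1 < p.1.2 + p.2.2 :=
    mem_filter.2 ⟨by simpa [hm] using ⟨m + 1, by omega⟩, by dsimp only; omega⟩
  have hcard : #(congruentFactorizations (m + 2) m) = 2 * (M (m + 2) 2 + 1) := by
    rw [congruentFactorizations.card_eq_two_mul_card_filter_lt hm, M_eq_card hm,
      filter_two_lt_eq_erase, card_erase_add_one hbase]
  rw [Nat.add_sub_cancel]
  constructor
  · intro hodd
    have h := congruentFactorizations.card_of_odd hodd ((Nat.odd_add.1 hodd).2 even_two)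
    rw [hcard] at h
    have h' : (2 * (M (m + 2) 2 + 1) : ℝ) = #(m + 2).divisors * #m.divisors := by exact_mod_cast h
    linarith
  · intro heven
    have h := congruentFactorizations.card_of_even heven ((Nat.even_add.1 heven).2 even_two)
      (by omega)
    rw [hcard] at h
    have h' : (M (m + 2) 2 + 1 : ℝ) = thetaOdd (m + 2) * thetaOdd m := by exact_mod_cast by omega
    linarith
end
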